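/- arXiv:2106.00852 — 2 statements merged into one kernel-verified Lean document; each statement's English description precedes it below -/
import Mathlib

section
/- Let F be a finite field with |F| = q and let V be an F-vector space of finite dimension r ≥ 1. Let w : ℙ(V) → ℕ satisfy w(p) ≥ 1 for all projective points p. Then q^{r−1}·(q − 1)·w(ℙ(V)) = (q^r − 1)·g*_w(ℙ(V)) holds if and only if w is constant on ℙ(V), where g*_w(ℙ(V)) = min over linear hyperplanes H of V of w(ℙ(V) ∖ pts(H)). -/
open Set Module

/-- The set of projective points lying in a subspace `U` of `V`. -/
def projPts {F V : Type*} [DivisionRing F] [AddCommGroup V] [Module F V]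
    (U : Submodule F V) : Set (Projectivization F V) :=
  {p | p.submodule ≤ U}

/-- The weight of a set of projective points. -/
noncomputable def projWeight {F V : Type*} [DivisionRing F] [AddCommGroup V] [Module F V]
    (X : Set (Projectivization F V)) (w : Projectivization F V → ℕ) : ℕ :=
  ∑ᶠ p ∈ X, w p

/-- The weighted cogirth of a set `S` of projective points: the minimum, over all linear
hyperplanes `H` of `V`, of the weight of `S \ pts(H)`. -/
noncomputable def projCogirthW {F V : Type*} [DivisionRing F] [AddCommGroup V] [Module F V]
    (S : Set (Projectivization F V)) (w : Projectivization F V → ℕ) : ℕ :=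
  sInf {n | ∃ H : Submodule F V, finrank F H = finrank F V - 1 ∧ n = projWeight (S \ projPts H) w}

set_option maxHeartbeats 1000000


lemma aux_arith (qq P A B M : ℕ) (hq : 2 ≤ qq) (hP : 1 ≤ P) (hsum : A + B = M)
    (hM : (qq - 1) * M = P * qq - 1) (hA : (qq - 1) * A = P - 1) : B = P := by
  have h1 : (qq - 1) * A + (qq - 1) * B = (qq - 1) * M := by rw [← Nat.mul_add, hsum]
  have h2 : P * (qq - 1) + P = P * qq := by
    rw [← Nat.mul_succ]
    congr 1
    omega
  have h3 : (qq - 1) * B = P * (qq - 1) := by omega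
  have h4 : (qq - 1) * B = (qq - 1) * P := by rw [h3, mul_comm]
  exact Nat.eq_of_mul_eq_mul_left (by omega) h4

section Basics
variable {F V : Type*} [Field F] [AddCommGroup V] [Module F V]

lemma aux_mem_projPts {U : Submodule F V} {p : Projectivization F V} :
    p ∈ projPts U ↔ p.rep ∈ U := by
  change p.submodule ≤ U ↔ _
  rw [Projectivization.submodule_eq, Submodule.span_singleton_le_iff_mem]

lemma aux_card_nonzero {α : Type*} [Finite α] (a : α) :
    Nat.card {x : α // x ≠ a} = Nat.card α - 1 := by
  classical
  letI := Fintype.ofFinite α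
  rw [Nat.card_eq_fintype_card, Nat.card_eq_fintype_card]
  have : Fintype.card {x : α // x ≠ a} = Fintype.card α - Fintype.card {x : α // x = a} :=
    Fintype.card_subtype_compl _
  rw [this, Fintype.card_subtype_eq]
end Basics

section Counting
variable {F V : Type*} [Field F] [Fintype F] [AddCommGroup V] [Module F V] [FiniteDimensional F V]

lemma aux_card_submodule (U : Submodule F V) :
    Nat.card U = Fintype.card F ^ finrank F U := by
  haveI : Finite V := Module.finite_of_finite F
  letI : Fintype U := Fintype.ofFinite U
  rw [Nat.card_eq_fintype_card]
  exact card_eq_pow_finrank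

/-- The key `(q-1)`-to-1 count: `(q-1) * #pts(U) = q^(dim U) - 1`. -/
lemma aux_card_projPts (U : Submodule F V) :
    (Fintype.card F - 1) * Nat.card (projPts U)
      = Fintype.card F ^ finrank F U - 1 := by
  classical
  haveI : Finite V := Module.finite_of_finite F
  set S : Set (Projectivization F V) := projPts U with hS
  have hmem : ∀ (v : {v : V // v ∈ U ∧ v ≠ 0}), Projectivization.mk F v.1 v.2.2 ∈ S := by
    intro v
    show (Projectivization.mk F v.1 v.2.2).submodule ≤ U
    rw [Projectivization.submodule_mk, Submodule.span_singleton_le_iff_mem]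
    exact v.2.1
  set f : {v : V // v ∈ U ∧ v ≠ 0} → S := fun v => ⟨Projectivization.mk F v.1 v.2.2, hmem v⟩ with hf
  have fib : ∀ p : S, Nonempty ({c : F // c ≠ 0} ≃ {v // f v = p}) := by
    intro p
    have hrep : (p : Projectivization F V).rep ∈ U := by
      have h := p.2
      have h2 : (p : Projectivization F V).submodule ≤ U := h
      rw [Projectivization.submodule_eq] at h2
      exact (Submodule.span_singleton_le_iff_mem _ _).1 h2
    have hg : ∀ c : {c : F // c ≠ 0}, f ⟨c.1 • (p : Projectivization F V).rep,
        U.smul_mem c.1 hrep, smul_ne_zero c.2 (Projectivization.rep_nonzero _)⟩ = p := by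
      intro c
      apply Subtype.ext
      show Projectivization.mk F (c.1 • (p : Projectivization F V).rep) _
        = (p : Projectivization F V)
      conv_rhs => rw [← (p : Projectivization F V).mk_rep]
      rw [Projectivization.mk_eq_mk_iff]
      exact ⟨Units.mk0 c.1 c.2, rfl⟩
    let g : {c : F // c ≠ 0} → {v // f v = p} := fun c =>
      ⟨⟨c.1 • (p : Projectivization F V).rep,
        U.smul_mem c.1 hrep, smul_ne_zero c.2 (Projectivization.rep_nonzero _)⟩, hg c⟩
    refine ⟨Equiv.ofBijective g ⟨?_, ?_⟩⟩
    · intro c c' h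
      simp only [g, Subtype.mk.injEq] at h
      have : (c.1 - c'.1) • (p : Projectivization F V).rep = 0 := by
        rw [sub_smul, h, sub_self]
      rcases smul_eq_zero.1 this with h2 | h2
      · exact Subtype.ext (sub_eq_zero.1 h2)
      · exact absurd h2 (Projectivization.rep_nonzero _)
    · rintro ⟨⟨v, hvU, hv0⟩, hfv⟩
      have h : Projectivization.mk F v hv0 = (p : Projectivization F V) := congrArg Subtype.val hfv
      conv_rhs at h => rw [← (p : Projectivization F V).mk_rep]
      rw [Projectivization.mk_eq_mk_iff] at h
      obtain ⟨a, ha⟩ := h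
      refine ⟨⟨(a : F), a.ne_zero⟩, ?_⟩
      apply Subtype.ext; apply Subtype.ext
      show (a : F) • (p : Projectivization F V).rep = v
      rw [← ha]; rfl
  haveI : Finite (Projectivization F V) := Quotient.finite _
  letI : Fintype {v : V // v ∈ U ∧ v ≠ 0} := Fintype.ofFinite _
  letI : Fintype S := Fintype.ofFinite _
  letI : ∀ p : S, Fintype {v // f v = p} := fun p => Fintype.ofFinite _
  have h1 : Nat.card {v : V // v ∈ U ∧ v ≠ 0} = ∑ p : S, Nat.card {v // f v = p} := by
    rw [Nat.card_congr (Equiv.sigmaFiberEquiv f).symm, Nat.card_eq_fintype_card,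
      Fintype.card_sigma]
    congr 1; ext p; rw [Nat.card_eq_fintype_card]
  have h2 : ∀ p : S, Nat.card {v // f v = p} = Fintype.card F - 1 := by
    intro p
    obtain ⟨e⟩ := fib p
    rw [← Nat.card_congr e, aux_card_nonzero (0 : F), Nat.card_eq_fintype_card]
  have h3 : Nat.card {v : V // v ∈ U ∧ v ≠ 0} = Fintype.card F ^ finrank F U - 1 := by
    have e : {v : V // v ∈ U ∧ v ≠ 0} ≃ {u : U // u ≠ 0} :=
      { toFun := fun v => ⟨⟨v.1, v.2.1⟩, fun h0 => v.2.2 (congrArg Subtype.val h0)⟩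
        invFun := fun u => ⟨u.1.1, u.1.2, fun h0 => u.2 (Subtype.ext h0)⟩
        left_inv := fun v => rfl
        right_inv := fun u => rfl }
    rw [Nat.card_congr e, aux_card_nonzero (0 : U), aux_card_submodule]
  rw [h3] at h1
  rw [h1]
  simp only [h2]
  rw [Finset.sum_const, smul_eq_mul, mul_comm, Nat.card_eq_fintype_card, Finset.card_univ]
end Counting

section Quot
variable {F V : Type*} [Field F] [AddCommGroup V] [Module F V] [FiniteDimensional F V]

lemma aux_finrank_map_mkQ {U W : Submodule F V} (h : U ≤ W) :
    finrank F (W.map U.mkQ) + finrank F U = finrank F W := by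
  have e1 : LinearMap.range (U.mkQ.comp W.subtype) = W.map U.mkQ := by
    rw [LinearMap.range_comp, Submodule.range_subtype]
  have e2 : LinearMap.ker (U.mkQ.comp W.subtype) = U.comap W.subtype := by
    rw [LinearMap.ker_comp, Submodule.ker_mkQ]
  have := LinearMap.finrank_range_add_finrank_ker (U.mkQ.comp W.subtype)
  rw [e1, e2] at this
  rw [← this]
  congr 1
  exact (Submodule.comapSubtypeEquivOfLe h).finrank_eq.symm

/-- Subspaces of dimension `k` containing `U` correspond to subspaces of `V/U` of
dimension `k - dim U`. -/
noncomputable def auxQuotEquiv (U : Submodule F V) (k : ℕ) :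
    {W : Submodule F V // U ≤ W ∧ finrank F W = k} ≃
      {L : Submodule F (V ⧸ U) // finrank F L + finrank F U = k} where
  toFun W := ⟨W.1.map U.mkQ, by rw [aux_finrank_map_mkQ W.2.1]; exact W.2.2⟩
  invFun L := ⟨L.1.comap U.mkQ, by
    have hle : U ≤ L.1.comap U.mkQ := by
      intro u hu
      rw [Submodule.mem_comap, Submodule.mkQ_apply, (Submodule.Quotient.mk_eq_zero U).2 hu]
      exact L.1.zero_mem
    constructor
    · exact hle
    ·
      have hmap : (L.1.comap U.mkQ).map U.mkQ = L.1 :=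
        Submodule.map_comap_eq_of_surjective (Submodule.mkQ_surjective U) _
      have := aux_finrank_map_mkQ hle
      rw [hmap] at this
      rw [← this]; exact L.2⟩
  left_inv W := by
    apply Subtype.ext
    show (W.1.map U.mkQ).comap U.mkQ = W.1
    rw [Submodule.comap_map_eq, Submodule.ker_mkQ, sup_eq_left.2 W.2.1]
  right_inv L := by
    apply Subtype.ext
    exact Submodule.map_comap_eq_of_surjective (Submodule.mkQ_surjective U) _

lemma aux_finrank_quot (U : Submodule F V) :
    finrank F (V ⧸ U) = finrank F V - finrank F U := by
  have := Submodule.finrank_quotient_add_finrank U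
  omega

lemma aux_finrank_sup_span {U : Submodule F V} {x : V} (hx : x ∉ U) :
    finrank F (U ⊔ Submodule.span F {x} : Submodule F V) = finrank F U + 1 := by
  have hx0 : x ≠ 0 := fun h => hx (h ▸ U.zero_mem)
  have hinf : U ⊓ Submodule.span F {x} = ⊥ := by
    rw [eq_bot_iff]
    intro v hv
    obtain ⟨hvU, hvS⟩ := Submodule.mem_inf.1 hv
    rw [Submodule.mem_span_singleton] at hvS
    obtain ⟨c, rfl⟩ := hvS
    rcases eq_or_ne c 0 with rfl | hc
    · simp
    · exact absurd ((U.smul_mem_iff hc).1 hvU) hx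
  have := Submodule.finrank_sup_add_finrank_inf_eq U (Submodule.span F {x})
  rw [hinf, finrank_bot, add_zero, finrank_span_singleton hx0] at this
  exact this

lemma aux_exists_finrank (k : ℕ) (hk : k ≤ finrank F V) :
    ∃ W : Submodule F V, finrank F W = k := by
  induction k with
  | zero => exact ⟨⊥, finrank_bot F V⟩
  | succ n ih =>
    obtain ⟨W, hW⟩ := ih (le_of_lt (Nat.lt_of_succ_le hk))
    have hWlt : W < ⊤ := by
      rcases eq_or_lt_of_le (le_top : W ≤ ⊤) with h | h
      · exfalso
        rw [h, finrank_top] at hW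
        omega
      · exact h
    obtain ⟨x, _, hx⟩ := SetLike.exists_of_lt hWlt
    exact ⟨W ⊔ Submodule.span F {x}, by rw [aux_finrank_sup_span hx, hW]⟩
end Quot

section Functionals
variable {F V : Type*} [Field F] [AddCommGroup V] [Module F V] [FiniteDimensional F V]

lemma aux_exists_functional {H : Submodule F V} (hH : finrank F H = finrank F V - 1)
    (hr : 1 ≤ finrank F V) {x : V} (hx : x ∉ H) :
    ∃ φ : V →ₗ[F] F, LinearMap.ker φ = H ∧ φ x = 1 := by
  have hHle : finrank F H ≤ finrank F V := Submodule.finrank_le H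
  have h1 : finrank F (V ⧸ H) = 1 := by
    have := Submodule.finrank_quotient_add_finrank H
    omega
  have hxq : H.mkQ x ≠ 0 := by
    rw [Submodule.mkQ_apply, Ne, Submodule.Quotient.mk_eq_zero]
    exact hx
  set b := FiniteDimensional.basisSingleton (Fin 1) h1 (H.mkQ x) hxq with hb
  refine ⟨(b.coord 0).comp H.mkQ, ?_, ?_⟩
  · have hker : LinearMap.ker (b.coord 0) = ⊥ := by
      rw [eq_bot_iff]
      intro v hv
      have hv0 : b.repr v 0 = 0 := hv
      have : v = b.repr v 0 • b 0 := by
        conv_lhs => rw [← b.sum_repr v]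
        rw [Fin.sum_univ_one]
      rw [this, hv0, zero_smul]
      exact (Submodule.mem_bot F).2 rfl
    rw [LinearMap.ker_comp, hker, Submodule.comap_bot, Submodule.ker_mkQ]
  · show b.coord 0 (H.mkQ x) = 1
    have : H.mkQ x = b 0 := (FiniteDimensional.basisSingleton_apply (Fin 1) h1 _ hxq 0).symm
    rw [this, Basis.coord_apply, Basis.repr_self]
    simp

lemma aux_ker_finrank {φ : V →ₗ[F] F} (hφ : φ ≠ 0) :
    finrank F (LinearMap.ker φ) = finrank F V - 1 := by
  have h0 : LinearMap.range φ ≠ ⊥ := by rw [Ne, LinearMap.range_eq_bot]; exact hφ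
  have hfr : finrank F (LinearMap.range φ) = 1 := by
    have hle : finrank F (LinearMap.range φ) ≤ 1 := by
      have := Submodule.finrank_le (LinearMap.range φ)
      rwa [finrank_self] at this
    have hpos : finrank F (LinearMap.range φ) ≠ 0 :=
      fun h => h0 (Submodule.finrank_eq_zero.1 h)
    omega
  have h2 := LinearMap.finrank_range_add_finrank_ker φ
  rw [hfr] at h2
  omega

/-- Fiber count: functionals with kernel a fixed hyperplane. -/
lemma aux_card_fiber_ker [Fintype F] {H : Submodule F V} (hH : finrank F H = finrank F V - 1)
    (hr : 1 ≤ finrank F V) :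
    Nat.card {φ : V →ₗ[F] F // φ ≠ 0 ∧ LinearMap.ker φ = H} = Fintype.card F - 1 := by
  have hne : H ≠ ⊤ := by
    intro h
    rw [h, finrank_top] at hH
    omega
  obtain ⟨x, -, hx⟩ := SetLike.exists_of_lt (show H < ⊤ from lt_top_iff_ne_top.2 hne)
  obtain ⟨φ₀, hker₀, hval₀⟩ := aux_exists_functional hH hr hx
  have key : ∀ c : F, c ≠ 0 → (c • φ₀ ≠ 0 ∧ LinearMap.ker (c • φ₀) = H) := by
    intro c hc
    constructor
    · intro h
      have h0 : (c • φ₀) x = 0 := by rw [h]; rfl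
      rw [LinearMap.smul_apply, hval₀, smul_eq_mul, mul_one] at h0
      exact hc h0
    · rw [LinearMap.ker_smul _ c hc, hker₀]
  let g : {c : F // c ≠ 0} → {φ : V →ₗ[F] F // φ ≠ 0 ∧ LinearMap.ker φ = H} :=
    fun c => ⟨c.1 • φ₀, key c.1 c.2⟩
  have hbij : Function.Bijective g := by
    constructor
    · intro c c' h
      have h1 : (c.1 • φ₀ : V →ₗ[F] F) = c'.1 • φ₀ := congrArg Subtype.val h
      have h2 := congrArg (fun ψ : V →ₗ[F] F => ψ x) h1
      simp only [LinearMap.smul_apply, hval₀, smul_eq_mul, mul_one] at h2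
      exact Subtype.ext h2
    · rintro ⟨φ, hφ0, hφker⟩
      have hc : φ x ≠ 0 := by
        intro h
        have hmem : x ∈ LinearMap.ker φ := h
        rw [hφker] at hmem
        exact hx hmem
      refine ⟨⟨φ x, hc⟩, ?_⟩
      apply Subtype.ext
      show φ x • φ₀ = φ
      ext v
      have hu : v - (φ₀ v) • x ∈ LinearMap.ker φ₀ := by
        rw [LinearMap.mem_ker, map_sub, map_smul, hval₀, smul_eq_mul, mul_one, sub_self]
      rw [hker₀, ← hφker, LinearMap.mem_ker, map_sub, map_smul, sub_eq_zero] at hu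
      rw [LinearMap.smul_apply, smul_eq_mul]
      rw [smul_eq_mul] at hu
      rw [hu, mul_comm]
  rw [← Nat.card_congr (Equiv.ofBijective g hbij), aux_card_nonzero (0 : F),
    Nat.card_eq_fintype_card]

variable [Fintype F]

lemma aux_card_hyperplanes (hr : 1 ≤ finrank F V) :
    (Fintype.card F - 1) * Nat.card {H : Submodule F V // finrank F H = finrank F V - 1}
      = Fintype.card F ^ finrank F V - 1 := by
  classical
  haveI : Finite V := Module.finite_of_finite F
  haveI : Finite (V →ₗ[F] F) := Module.finite_of_finite F
  haveI : Finite (Submodule F V) :=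
    Finite.of_injective (fun H : Submodule F V => (H : Set V)) SetLike.coe_injective
  set k : {φ : V →ₗ[F] F // φ ≠ 0} → {H : Submodule F V // finrank F H = finrank F V - 1} :=
    fun φ => ⟨LinearMap.ker φ.1, aux_ker_finrank φ.2⟩ with hk
  letI : Fintype {φ : V →ₗ[F] F // φ ≠ 0} := Fintype.ofFinite _
  letI : Fintype {H : Submodule F V // finrank F H = finrank F V - 1} := Fintype.ofFinite _
  letI : ∀ H, Fintype {φ // k φ = H} := fun H => Fintype.ofFinite _
  have h1 : Nat.card {φ : V →ₗ[F] F // φ ≠ 0}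
      = ∑ H : {H : Submodule F V // finrank F H = finrank F V - 1},
          Nat.card {φ // k φ = H} := by
    rw [Nat.card_congr (Equiv.sigmaFiberEquiv k).symm, Nat.card_eq_fintype_card,
      Fintype.card_sigma]
    congr 1; ext H; rw [Nat.card_eq_fintype_card]
  have h2 : ∀ H : {H : Submodule F V // finrank F H = finrank F V - 1},
      Nat.card {φ // k φ = H} = Fintype.card F - 1 := by
    intro H
    have e : {φ // k φ = H} ≃ {φ : V →ₗ[F] F // φ ≠ 0 ∧ LinearMap.ker φ = H.1} :=
      { toFun := fun φ => ⟨φ.1.1, φ.1.2, congrArg Subtype.val φ.2⟩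
        invFun := fun φ => ⟨⟨φ.1, φ.2.1⟩, Subtype.ext φ.2.2⟩
        left_inv := fun φ => by ext : 2 <;> rfl
        right_inv := fun φ => rfl }
    rw [Nat.card_congr e, aux_card_fiber_ker H.2 hr]
  have h3 : Nat.card {φ : V →ₗ[F] F // φ ≠ 0} = Fintype.card F ^ finrank F V - 1 := by
    rw [aux_card_nonzero (0 : V →ₗ[F] F)]
    congr 1
    letI : Fintype (V →ₗ[F] F) := Fintype.ofFinite _
    rw [Nat.card_eq_fintype_card]
    have hd : finrank F (V →ₗ[F] F) = finrank F V := Subspace.dual_finrank_eq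
    rw [card_eq_pow_finrank (K := F) (V := V →ₗ[F] F), hd]
  rw [h3] at h1
  rw [h1]
  simp only [h2]
  rw [Finset.sum_const, smul_eq_mul, mul_comm, Nat.card_eq_fintype_card, Finset.card_univ]

lemma aux_card_hyp_through (hr : 1 ≤ finrank F V) {x : V} (hx : x ≠ 0) :
    (Fintype.card F - 1) *
      Nat.card {H : Submodule F V // finrank F H = finrank F V - 1 ∧ x ∈ H}
      = Fintype.card F ^ (finrank F V - 1) - 1 := by
  rcases eq_or_lt_of_le hr with h1 | h2
  · -- finrank V = 1
    have : IsEmpty {H : Submodule F V // finrank F H = finrank F V - 1 ∧ x ∈ H} := by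
      refine ⟨fun H => ?_⟩
      have hb : H.1 = ⊥ := Submodule.finrank_eq_zero.1 (by omega)
      have hm := H.2.2
      rw [hb, Submodule.mem_bot] at hm
      exact hx hm
    rw [Nat.card_of_isEmpty]
    have h0 : finrank F V - 1 = 0 := by omega
    rw [h0]
    simp
  · -- finrank V ≥ 2
    have hr2 : 2 ≤ finrank F V := h2
    have hspan : finrank F (Submodule.span F {x}) = 1 := finrank_span_singleton hx
    have e1 : {H : Submodule F V // finrank F H = finrank F V - 1 ∧ x ∈ H} ≃
        {W : Submodule F V // Submodule.span F {x} ≤ W ∧ finrank F W = finrank F V - 1} :=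
      Equiv.subtypeEquivRight (fun W => by
        rw [Submodule.span_singleton_le_iff_mem]; tauto)
    have e2 := auxQuotEquiv (Submodule.span F {x}) (finrank F V - 1)
    have e3 : {L : Submodule F (V ⧸ Submodule.span F {x}) //
        finrank F L + finrank F (Submodule.span F {x}) = finrank F V - 1} ≃
        {L : Submodule F (V ⧸ Submodule.span F {x}) //
          finrank F L = finrank F (V ⧸ Submodule.span F {x}) - 1} :=
      Equiv.subtypeEquivRight (fun L => by
        rw [hspan, aux_finrank_quot, hspan]
        omega)
    rw [Nat.card_congr ((e1.trans e2).trans e3)]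
    have hq : 1 ≤ finrank F (V ⧸ Submodule.span F {x}) := by
      rw [aux_finrank_quot, hspan]; omega
    rw [aux_card_hyperplanes hq, aux_finrank_quot, hspan]

lemma aux_card_hyp_avoid (hr : 1 ≤ finrank F V) {x : V} (hx : x ≠ 0) :
    Nat.card {H : Submodule F V // finrank F H = finrank F V - 1 ∧ x ∉ H}
      = Fintype.card F ^ (finrank F V - 1) := by
  classical
  haveI : Finite V := Module.finite_of_finite F
  haveI : Finite (Submodule F V) :=
    Finite.of_injective (fun H : Submodule F V => (H : Set V)) SetLike.coe_injective
  letI : Fintype (Submodule F V) := Fintype.ofFinite _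
  have hsplit : Nat.card {H : Submodule F V // finrank F H = finrank F V - 1 ∧ x ∈ H}
      + Nat.card {H : Submodule F V // finrank F H = finrank F V - 1 ∧ x ∉ H}
      = Nat.card {H : Submodule F V // finrank F H = finrank F V - 1} := by
    rw [Nat.card_eq_fintype_card, Nat.card_eq_fintype_card, Nat.card_eq_fintype_card,
      Fintype.card_subtype, Fintype.card_subtype, Fintype.card_subtype]
    rw [← Finset.filter_filter (fun H : Submodule F V => finrank F H = finrank F V - 1)
      (fun H => x ∈ H),
      ← Finset.filter_filter (fun H : Submodule F V => finrank F H = finrank F V - 1)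
      (fun H => x ∉ H)]
    exact Finset.card_filter_add_card_filter_not (fun H => x ∈ H)
  have hq2 : 2 ≤ Fintype.card F := Fintype.one_lt_card
  have hP1 : 1 ≤ Fintype.card F ^ (finrank F V - 1) :=
    Nat.one_le_iff_ne_zero.2 (pow_ne_zero _ (by omega))
  have ht : Fintype.card F ^ (finrank F V - 1) * Fintype.card F = Fintype.card F ^ finrank F V := by
    rw [← pow_succ]
    congr 1
    omega
  exact aux_arith (Fintype.card F) (Fintype.card F ^ (finrank F V - 1)) _ _ _ hq2 hP1 hsplit
    ((aux_card_hyperplanes hr).trans (by rw [ht])) (aux_card_hyp_through hr hx)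
end Functionals

section W
variable {F V : Type*} [Field F] [AddCommGroup V] [Module F V]
variable [Fintype (Projectivization F V)]

lemma aux_projWeight_eq (X : Set (Projectivization F V)) (w : Projectivization F V → ℕ)
    [Fintype X] : projWeight X w = ∑ p ∈ X.toFinset, w p := by
  rw [projWeight, ← finsum_mem_coe_finset, Set.coe_toFinset]

lemma aux_projWeight_split (X : Set (Projectivization F V)) (w : Projectivization F V → ℕ) :
    projWeight (Set.univ : Set (Projectivization F V)) w
      = projWeight X w + projWeight (Set.univ \ X) w := by
  classical
  rw [aux_projWeight_eq, aux_projWeight_eq, aux_projWeight_eq, Set.toFinset_diff,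
    Set.toFinset_univ, add_comm]
  exact (Finset.sum_sdiff (Finset.subset_univ _)).symm

lemma aux_projWeight_const (X : Set (Projectivization F V)) (c : ℕ) :
    projWeight X (fun _ => c) = Nat.card X * c := by
  classical
  rw [aux_projWeight_eq, Finset.sum_const, smul_eq_mul, Nat.card_eq_fintype_card,
    Set.toFinset_card]

lemma aux_sum_swap [Fintype (Submodule F V)] (w : Projectivization F V → ℕ)
    (𝓐 : Finset (Submodule F V)) (S : Submodule F V → Set (Projectivization F V)) :
    ∑ W ∈ 𝓐, projWeight (S W) w
      = ∑ p : Projectivization F V, Nat.card {W : Submodule F V // W ∈ 𝓐 ∧ p ∈ S W} * w p := by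
  classical
  have h1 : ∀ W, projWeight (S W) w = ∑ p : Projectivization F V,
      if p ∈ S W then w p else 0 := by
    intro W
    rw [aux_projWeight_eq, ← Set.filter_mem_univ_eq_toFinset, Finset.sum_filter]
  rw [Finset.sum_congr rfl (fun W _ => h1 W), Finset.sum_comm]
  refine Finset.sum_congr rfl (fun p _ => ?_)
  rw [← Finset.sum_filter, Finset.sum_const, smul_eq_mul, Nat.card_eq_fintype_card,
    Fintype.card_subtype, ← Finset.filter_filter, Finset.filter_univ_mem]
end W

section C5
variable {F V : Type*} [Field F] [AddCommGroup V] [Module F V] [FiniteDimensional F V]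

lemma aux_projPts_dim1 (p : Projectivization F V) :
    projPts (p.submodule) = {p} := by
  ext x
  constructor
  · intro hx
    have hle : x.submodule ≤ p.submodule := hx
    have heq : x.submodule = p.submodule :=
      Submodule.eq_of_le_of_finrank_le hle
        (by rw [x.finrank_submodule, p.finrank_submodule])
    exact Projectivization.submodule_injective heq
  · intro hx
    rw [Set.mem_singleton_iff.1 hx]
    show Projectivization.submodule p ≤ Projectivization.submodule p
    exact le_rfl

variable [Fintype F]

lemma aux_card_proj :
    (Fintype.card F - 1) * Nat.card (Projectivization F V)
      = Fintype.card F ^ finrank F V - 1 := by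
  have h := aux_card_projPts (F := F) (V := V) ⊤
  rw [finrank_top] at h
  have hs : projPts (⊤ : Submodule F V) = (Set.univ : Set (Projectivization F V)) := by
    ext p; simp [projPts]
  rw [hs, Nat.card_congr (Equiv.Set.univ _)] at h
  exact h

/-- Number of extensions of `U` by one dimension. -/
lemma aux_card_ext (U : Submodule F V) :
    (Fintype.card F - 1) *
      Nat.card {W : Submodule F V // U ≤ W ∧ finrank F W = finrank F U + 1}
      = Fintype.card F ^ (finrank F V - finrank F U) - 1 := by
  have e1 := auxQuotEquiv U (finrank F U + 1)
  have e2 : {L : Submodule F (V ⧸ U) // finrank F L + finrank F U = finrank F U + 1} ≃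
      {L : Submodule F (V ⧸ U) // finrank F L = 1} :=
    Equiv.subtypeEquivRight (fun L => by omega)
  have e3 : {L : Submodule F (V ⧸ U) // finrank F L = 1} ≃ Projectivization F (V ⧸ U) :=
    (Projectivization.equivSubmodule F (V ⧸ U)).symm
  rw [Nat.card_congr ((e1.trans e2).trans e3), aux_card_proj, aux_finrank_quot]

lemma aux_card_ext_ge_two {U : Submodule F V} (h2 : finrank F U + 2 ≤ finrank F V) :
    2 ≤ Nat.card {W : Submodule F V // U ≤ W ∧ finrank F W = finrank F U + 1} := by
  have h := aux_card_ext U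
  have hq2 : 2 ≤ Fintype.card F := Fintype.one_lt_card
  by_contra hlt
  push_neg at hlt
  have hm : (Fintype.card F - 1) *
      Nat.card {W : Submodule F V // U ≤ W ∧ finrank F W = finrank F U + 1}
      ≤ (Fintype.card F - 1) * 1 := Nat.mul_le_mul_left _ (by omega)
  have hpow : Fintype.card F ^ 2 ≤ Fintype.card F ^ (finrank F V - finrank F U) :=
    Nat.pow_le_pow_right (by omega) (by omega)
  have hsq : Fintype.card F ^ 2 = Fintype.card F * Fintype.card F := sq (Fintype.card F)
  have h2q : 2 * Fintype.card F ≤ Fintype.card F * Fintype.card F :=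
    Nat.mul_le_mul_right _ (by omega)
  omega

/-- There is a unique one-dimensional extension of `U` through a point outside `U`. -/
lemma aux_unique_ext {U : Submodule F V} {x : V} (hx : x ∉ U) :
    Nat.card {W : Submodule F V // (U ≤ W ∧ finrank F W = finrank F U + 1) ∧ x ∈ W} = 1 := by
  have h1 : finrank F (U ⊔ Submodule.span F {x} : Submodule F V) = finrank F U + 1 :=
    aux_finrank_sup_span hx
  rw [Nat.card_eq_one_iff_unique]
  constructor
  · refine ⟨fun W W' => ?_⟩
    obtain ⟨⟨hUW, hfW⟩, hxW⟩ := W.2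
    obtain ⟨⟨hUW', hfW'⟩, hxW'⟩ := W'.2
    have hle : U ⊔ Submodule.span F {x} ≤ W.1 :=
      sup_le hUW ((Submodule.span_singleton_le_iff_mem _ _).2 hxW)
    have hle' : U ⊔ Submodule.span F {x} ≤ W'.1 :=
      sup_le hUW' ((Submodule.span_singleton_le_iff_mem _ _).2 hxW')
    have heq : U ⊔ Submodule.span F {x} = W.1 :=
      Submodule.eq_of_le_of_finrank_le hle (by rw [h1, hfW])
    have heq' : U ⊔ Submodule.span F {x} = W'.1 :=
      Submodule.eq_of_le_of_finrank_le hle' (by rw [h1, hfW'])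
    exact Subtype.ext (heq ▸ heq')
  · exact ⟨⟨U ⊔ Submodule.span F {x}, ⟨le_sup_left, h1⟩,
      (le_sup_right : Submodule.span F {x} ≤ U ⊔ Submodule.span F {x})
        (Submodule.mem_span_singleton_self x)⟩⟩

lemma aux_card_compl {H : Submodule F V} (hH : finrank F H = finrank F V - 1)
    (hr : 1 ≤ finrank F V) [Fintype (Projectivization F V)] :
    Nat.card ↥(Set.univ \ projPts H : Set (Projectivization F V))
      = Fintype.card F ^ (finrank F V - 1) := by
  classical
  have hq2 : 2 ≤ Fintype.card F := Fintype.one_lt_card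
  have hsplit : Nat.card (projPts H)
      + Nat.card ↥(Set.univ \ projPts H : Set (Projectivization F V))
      = Nat.card (Projectivization F V) := by
    have := aux_projWeight_split (F := F) (V := V) (projPts H) (fun _ => 1)
    rw [aux_projWeight_const, aux_projWeight_const, aux_projWeight_const] at this
    simp only [mul_one] at this
    rw [← this, Nat.card_congr (Equiv.Set.univ _)]
  have hP1 : 1 ≤ Fintype.card F ^ (finrank F V - 1) :=
    Nat.one_le_iff_ne_zero.2 (pow_ne_zero _ (by omega))
  have ht : Fintype.card F ^ (finrank F V - 1) * Fintype.card F
      = Fintype.card F ^ finrank F V := by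
    rw [← pow_succ]; congr 1; omega
  refine aux_arith (Fintype.card F) (Fintype.card F ^ (finrank F V - 1)) _ _ _ hq2 hP1 hsplit
    ((aux_card_proj).trans (by rw [ht])) ?_
  rw [aux_card_projPts, hH]
end C5
section C6
open scoped Classical
variable {F V : Type*} [Field F] [AddCommGroup V] [Module F V] [FiniteDimensional F V]
variable [Fintype F] [Fintype (Projectivization F V)] [Fintype (Submodule F V)]

lemma aux_ext_sum (w : Projectivization F V → ℕ) (U : Submodule F V) :
    ∑ W ∈ Finset.univ.filter (fun W : Submodule F V => U ≤ W ∧ finrank F W = finrank F U + 1),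
      projWeight (projPts W) w
    = Nat.card {W : Submodule F V // U ≤ W ∧ finrank F W = finrank F U + 1}
        * projWeight (projPts U) w
      + projWeight (Set.univ \ projPts U) w := by
  classical
  rw [aux_sum_swap]
  have hcnt : ∀ p : Projectivization F V,
      Nat.card {W : Submodule F V // W ∈ Finset.univ.filter
          (fun W : Submodule F V => U ≤ W ∧ finrank F W = finrank F U + 1) ∧ p ∈ projPts W}
      = if p ∈ projPts U
          then Nat.card {W : Submodule F V // U ≤ W ∧ finrank F W = finrank F U + 1}
          else 1 := by
    intro p
    by_cases hp : p ∈ projPts U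
    · rw [if_pos hp]
      apply Nat.card_congr
      apply Equiv.subtypeEquivRight
      intro W
      simp only [Finset.mem_filter, Finset.mem_univ, true_and, aux_mem_projPts]
      have hrep : p.rep ∈ U := aux_mem_projPts.1 hp
      exact ⟨fun h => h.1, fun h => ⟨h, h.1 hrep⟩⟩
    · rw [if_neg hp]
      have hx : p.rep ∉ U := fun h => hp (aux_mem_projPts.2 h)
      refine (Nat.card_congr (Equiv.subtypeEquivRight (fun W => ?_))).trans
        (aux_unique_ext (F := F) hx)
      simp only [Finset.mem_filter, Finset.mem_univ, true_and, aux_mem_projPts]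
  calc ∑ p : Projectivization F V,
        Nat.card {W : Submodule F V // W ∈ Finset.univ.filter
          (fun W : Submodule F V => U ≤ W ∧ finrank F W = finrank F U + 1) ∧ p ∈ projPts W}
          * w p
      = ∑ p : Projectivization F V,
          (if p ∈ projPts U
            then Nat.card {W : Submodule F V // U ≤ W ∧ finrank F W = finrank F U + 1}
                * w p
            else 1 * w p) := by
        refine Finset.sum_congr rfl (fun p _ => ?_)
        rw [hcnt p, ite_mul]
    _ = ∑ p ∈ Finset.univ.filter (fun p => p ∈ projPts U),
          Nat.card {W : Submodule F V // U ≤ W ∧ finrank F W = finrank F U + 1} * w p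
        + ∑ p ∈ Finset.univ.filter (fun p => p ∉ projPts U), 1 * w p := Finset.sum_ite _ _
    _ = Nat.card {W : Submodule F V // U ≤ W ∧ finrank F W = finrank F U + 1}
          * projWeight (projPts U) w
        + projWeight (Set.univ \ projPts U) w := by
        congr 1
        · rw [← Finset.mul_sum, Set.filter_mem_univ_eq_toFinset, aux_projWeight_eq]
        · rw [aux_projWeight_eq]
          refine Finset.sum_congr ?_ (fun p _ => one_mul _)
          rw [Set.toFinset_diff, Set.toFinset_univ, Finset.sdiff_eq_filter]
          refine Finset.filter_congr (fun p _ => ?_)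
          simp
end C6
section C7
open scoped Classical
variable {F V : Type*} [Field F] [AddCommGroup V] [Module F V] [FiniteDimensional F V]
variable [Fintype F] [Fintype (Projectivization F V)] [Fintype (Submodule F V)]

lemma aux_level (w : Projectivization F V → ℕ)
    (hB : ∀ H H' : Submodule F V, finrank F H = finrank F V - 1 →
      finrank F H' = finrank F V - 1 →
      projWeight (projPts H) w = projWeight (projPts H') w) :
    ∀ k, k ≤ finrank F V - 1 → ∀ U U' : Submodule F V,
      finrank F U = finrank F V - 1 - k → finrank F U' = finrank F V - 1 - k →
      projWeight (projPts U) w = projWeight (projPts U') w := by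
  intro k
  induction k with
  | zero =>
    intro _ U U' hU hU'
    exact hB U U' (by omega) (by omega)
  | succ k ih =>
    intro hk U U' hU hU'
    have hrk : finrank F U + 2 ≤ finrank F V := by omega
    have hUU' : finrank F U = finrank F U' := by omega
    have hq2 : 2 ≤ Fintype.card F := Fintype.one_lt_card
    have hm_eq : Nat.card {W : Submodule F V // U ≤ W ∧ finrank F W = finrank F U + 1}
        = Nat.card {W : Submodule F V // U' ≤ W ∧ finrank F W = finrank F U' + 1} := by
      apply Nat.eq_of_mul_eq_mul_left (show 0 < Fintype.card F - 1 by omega)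
      rw [aux_card_ext (F := F) U, aux_card_ext (F := F) U', hUU']
    have hm2 : 2 ≤ Nat.card {W : Submodule F V // U ≤ W ∧ finrank F W = finrank F U + 1} :=
      aux_card_ext_ge_two hrk
    obtain ⟨W0, hW0⟩ := aux_exists_finrank (F := F) (V := V) (finrank F U + 1) (by omega)
    have hsum : ∀ X : Submodule F V, finrank F X = finrank F U →
        ∑ W ∈ Finset.univ.filter
            (fun W : Submodule F V => X ≤ W ∧ finrank F W = finrank F X + 1),
          projWeight (projPts W) w
        = (Finset.univ.filter
            (fun W : Submodule F V => X ≤ W ∧ finrank F W = finrank F X + 1)).card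
            * projWeight (projPts W0) w := by
      intro X hX
      have hconst : ∀ W ∈ Finset.univ.filter
          (fun W : Submodule F V => X ≤ W ∧ finrank F W = finrank F X + 1),
          projWeight (projPts W) w = projWeight (projPts W0) w := by
        intro W hW
        rw [Finset.mem_filter] at hW
        exact ih (by omega) W W0 (by omega) (by omega)
      rw [Finset.sum_congr rfl hconst, Finset.sum_const, smul_eq_mul]
    have hcard : ∀ X : Submodule F V,
        (Finset.univ.filter
          (fun W : Submodule F V => X ≤ W ∧ finrank F W = finrank F X + 1)).card
        = Nat.card {W : Submodule F V // X ≤ W ∧ finrank F W = finrank F X + 1} := by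
      intro X
      rw [Nat.card_eq_fintype_card, Fintype.card_subtype]
    have e1 := aux_ext_sum (F := F) w U
    have e2 := aux_ext_sum (F := F) w U'
    rw [hsum U rfl, hcard] at e1
    rw [hsum U' hUU'.symm, hcard] at e2
    rw [← hm_eq] at e2
    have s1 := aux_projWeight_split (projPts U) w
    have s2 := aux_projWeight_split (projPts U') w
    -- integer algebra
    set m := Nat.card {W : Submodule F V // U ≤ W ∧ finrank F W = finrank F U + 1} with hm
    set aU := projWeight (projPts U) w
    set aU' := projWeight (projPts U') w
    set cU := projWeight (Set.univ \ projPts U) w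
    set cU' := projWeight (Set.univ \ projPts U') w
    set C := projWeight (projPts W0) w
    have e1' : (m : ℤ) * C = m * aU + cU := by exact_mod_cast e1
    have e2' : (m : ℤ) * C = m * aU' + cU' := by exact_mod_cast e2
    have s1' : (projWeight (Set.univ : Set (Projectivization F V)) w : ℤ) = aU + cU := by
      exact_mod_cast s1
    have s2' : (projWeight (Set.univ : Set (Projectivization F V)) w : ℤ) = aU' + cU' := by
      exact_mod_cast s2
    have hz : ((m : ℤ) - 1) * ((aU : ℤ) - aU') = 0 := by linear_combination e2' - e1' + s1' - s2'
    have hm1 : ((m : ℤ) - 1) ≠ 0 := by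
      have : (2 : ℤ) ≤ (m : ℤ) := by exact_mod_cast hm2
      omega
    have : (aU : ℤ) = aU' := by
      rcases mul_eq_zero.1 hz with h | h
      · exact absurd h hm1
      · linarith [sub_eq_zero.1 h]
    exact_mod_cast this
end C7
/-- Equality characterization for the full projective geometry `PG(r-1,q)`: for a positive
weight function `w` on `ℙ(V)`, `q^{r-1}·(q-1)·w(ℙ(V)) = (q^r - 1)·g*_w(ℙ(V))` holds if and
only if `w` is constant on `ℙ(V)`. -/
theorem proj_geometry_weighted_cogirth_equality_iff {F V : Type*} [Field F] [Fintype F]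
    [AddCommGroup V] [Module F V] [FiniteDimensional F V]
    (q r : ℕ) (hq : Fintype.card F = q) (hr : finrank F V = r) (hr1 : 1 ≤ r)
    (w : Projectivization F V → ℕ) (hw : ∀ p, 1 ≤ w p) :
    q ^ (r - 1) * (q - 1) * projWeight (Set.univ : Set (Projectivization F V)) w =
        (q ^ r - 1) * projCogirthW (Set.univ : Set (Projectivization F V)) w ↔
      ∀ p p' : Projectivization F V, w p = w p' := by
  classical
  subst hq
  subst hr
  haveI : Finite V := Module.finite_of_finite F
  haveI : Finite (Projectivization F V) := Quotient.finite _
  letI : Fintype (Projectivization F V) := Fintype.ofFinite _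
  haveI : Finite (Submodule F V) :=
    Finite.of_injective (fun H : Submodule F V => (H : Set V)) SetLike.coe_injective
  letI : Fintype (Submodule F V) := Fintype.ofFinite _
  have hq2 : 2 ≤ Fintype.card F := Fintype.one_lt_card
  set 𝒮 : Set ℕ := {n | ∃ H : Submodule F V, finrank F H = finrank F V - 1 ∧
    n = projWeight (Set.univ \ projPts H) w} with h𝒮def
  have hcog : projCogirthW (Set.univ : Set (Projectivization F V)) w = sInf 𝒮 := rfl
  obtain ⟨H₀, hH₀⟩ := aux_exists_finrank (F := F) (V := V) (finrank F V - 1) (by omega)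
  have hSne : 𝒮.Nonempty := ⟨_, H₀, hH₀, rfl⟩
  have hg_le : ∀ H : Submodule F V, finrank F H = finrank F V - 1 →
      sInf 𝒮 ≤ projWeight (Set.univ \ projPts H) w :=
    fun H hH => Nat.sInf_le ⟨H, hH, rfl⟩
  have hN := aux_card_proj (F := F) (V := V)
  constructor
  · -- equality implies constant
    intro heq p p'
    set 𝓗 : Finset (Submodule F V) :=
      Finset.univ.filter (fun H : Submodule F V => finrank F H = finrank F V - 1) with h𝓗
    have hsum := aux_sum_swap (F := F) w 𝓗 (fun H => Set.univ \ projPts H)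
    have hcnt : ∀ x : Projectivization F V,
        Nat.card {W : Submodule F V // W ∈ 𝓗 ∧ x ∈ Set.univ \ projPts W}
        = Fintype.card F ^ (finrank F V - 1) := by
      intro x
      refine (Nat.card_congr (Equiv.subtypeEquivRight (fun W => ?_))).trans
        (aux_card_hyp_avoid (F := F) (V := V) hr1 x.rep_nonzero)
      simp only [h𝓗, Finset.mem_filter, Finset.mem_univ, true_and, Set.mem_diff,
        Set.mem_univ, aux_mem_projPts]
    have hTsum : ∑ x : Projectivization F V, w x
        = projWeight (Set.univ : Set (Projectivization F V)) w := by
      rw [aux_projWeight_eq, Set.toFinset_univ]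
    have hsum2 : ∑ x : Projectivization F V,
        Nat.card {W : Submodule F V // W ∈ 𝓗 ∧ x ∈ Set.univ \ projPts W} * w x
        = Fintype.card F ^ (finrank F V - 1)
            * projWeight (Set.univ : Set (Projectivization F V)) w := by
      calc ∑ x : Projectivization F V,
            Nat.card {W : Submodule F V // W ∈ 𝓗 ∧ x ∈ Set.univ \ projPts W} * w x
          = ∑ x : Projectivization F V, Fintype.card F ^ (finrank F V - 1) * w x :=
            Finset.sum_congr rfl (fun x _ => by rw [hcnt x])
        _ = Fintype.card F ^ (finrank F V - 1) * ∑ x : Projectivization F V, w x :=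
            (Finset.mul_sum _ _ _).symm
        _ = Fintype.card F ^ (finrank F V - 1)
            * projWeight (Set.univ : Set (Projectivization F V)) w := by rw [hTsum]
    rw [hsum2] at hsum
    -- number of hyperplanes
    have hM : (Fintype.card F - 1) * 𝓗.card = Fintype.card F ^ finrank F V - 1 := by
      have := aux_card_hyperplanes (F := F) (V := V) hr1
      rwa [Nat.card_eq_fintype_card, Fintype.card_subtype] at this
    -- all cocircuits achieve the infimum
    have hG : ∀ H ∈ 𝓗, projWeight (Set.univ \ projPts H) w = sInf 𝒮 := by
      have hle : ∀ H ∈ 𝓗, sInf 𝒮 ≤ projWeight (Set.univ \ projPts H) w := by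
        intro H hH
        exact hg_le H (Finset.mem_filter.1 hH).2
      have hsum_eq : ∑ H ∈ 𝓗, sInf 𝒮 = ∑ H ∈ 𝓗, projWeight (Set.univ \ projPts H) w := by
        rw [Finset.sum_const, smul_eq_mul, hsum]
        apply Nat.eq_of_mul_eq_mul_left (show 0 < Fintype.card F - 1 by omega)
        calc (Fintype.card F - 1) * (𝓗.card * sInf 𝒮)
            = ((Fintype.card F - 1) * 𝓗.card) * sInf 𝒮 := by ring
          _ = (Fintype.card F ^ finrank F V - 1) * sInf 𝒮 := by rw [hM]
          _ = (Fintype.card F ^ finrank F V - 1)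
              * projCogirthW (Set.univ : Set (Projectivization F V)) w := by rw [hcog]
          _ = Fintype.card F ^ (finrank F V - 1) * (Fintype.card F - 1)
              * projWeight (Set.univ : Set (Projectivization F V)) w := heq.symm
          _ = (Fintype.card F - 1) * (Fintype.card F ^ (finrank F V - 1)
              * projWeight (Set.univ : Set (Projectivization F V)) w) := by ring
      intro H hH
      exact ((Finset.sum_eq_sum_iff_of_le hle).1 hsum_eq H hH).symm
    -- equal weights on all hyperplanes
    have hB : ∀ H H' : Submodule F V, finrank F H = finrank F V - 1 →
        finrank F H' = finrank F V - 1 →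
        projWeight (projPts H) w = projWeight (projPts H') w := by
      intro H H' h h'
      have s1 := aux_projWeight_split (projPts H) w
      have s2 := aux_projWeight_split (projPts H') w
      have g1 := hG H (Finset.mem_filter.2 ⟨Finset.mem_univ _, h⟩)
      have g2 := hG H' (Finset.mem_filter.2 ⟨Finset.mem_univ _, h'⟩)
      omega
    by_cases hr2 : 2 ≤ finrank F V
    · have key := aux_level (F := F) w hB (finrank F V - 2) (by omega)
        p.submodule p'.submodule
        (by rw [p.finrank_submodule]; omega) (by rw [p'.finrank_submodule]; omega)
      rw [aux_projPts_dim1, aux_projPts_dim1] at key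
      have hsingle : ∀ x : Projectivization F V, projWeight {x} w = w x := by
        intro x
        rw [aux_projWeight_eq, Set.toFinset_singleton, Finset.sum_singleton]
      rwa [hsingle, hsingle] at key
    · -- finrank V = 1 : the projective space is a single point
      have h1 : finrank F V = 1 := by omega
      have hpp : p = p' := by
        apply Projectivization.submodule_injective
        have e1 : p.submodule = ⊤ :=
          Submodule.eq_top_of_finrank_eq (by rw [p.finrank_submodule, h1])
        have e2 : p'.submodule = ⊤ :=
          Submodule.eq_top_of_finrank_eq (by rw [p'.finrank_submodule, h1])
        rw [e1, e2]
      rw [hpp]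
  · -- constant implies equality
    intro hconst
    haveI : Nontrivial V := by
      apply nontrivial_of_finrank_pos (R := F)
      omega
    obtain ⟨v, hv⟩ := exists_ne (0 : V)
    set c := w (Projectivization.mk F v hv) with hc
    have hwc : w = fun _ => c := funext fun x => hconst x _
    have hcompl : ∀ H : Submodule F V, finrank F H = finrank F V - 1 →
        projWeight (Set.univ \ projPts H) w = Fintype.card F ^ (finrank F V - 1) * c := by
      intro H hH
      rw [hwc, aux_projWeight_const, aux_card_compl hH hr1]
    have hSsing : 𝒮 = {Fintype.card F ^ (finrank F V - 1) * c} := by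
      ext n
      simp only [h𝒮def, Set.mem_setOf_eq, Set.mem_singleton_iff]
      constructor
      · rintro ⟨H, hH, rfl⟩
        exact hcompl H hH
      · rintro rfl
        exact ⟨H₀, hH₀, (hcompl H₀ hH₀).symm⟩
    have hg : projCogirthW (Set.univ : Set (Projectivization F V)) w
        = Fintype.card F ^ (finrank F V - 1) * c := by
      rw [hcog, hSsing]
      exact csInf_singleton _
    have hTc : projWeight (Set.univ : Set (Projectivization F V)) w
        = Nat.card (Projectivization F V) * c := by
      rw [hwc, aux_projWeight_const, Nat.card_congr (Equiv.Set.univ _)]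
    rw [hg, hTc, ← hN]
    ring
end

section
/- Let F be a finite field with |F| = q and let V be an F-vector space of finite dimension r ≥ 1. Let S ⊆ ℙ(V) be a set of projective points that spans V with S ≠ ℙ(V). Then q·(min over linear hyperplanes H of V of |S ∖ pts(H)|) = (q − 1)·|S| holds if and only if there exists a subspace W ≤ V with 1 ≤ dim W < r such that ℙ(V) ∖ S = pts(W); that is, equality holds exactly when S is a Bose–Burton geometry PG(r−1,q) − PG(dim W − 1, q). -/
set_option linter.unusedSectionVars false
set_option maxHeartbeats 1000000

open Set Module

/-- The cogirth of a set `S` of projective points: the minimum, over all linear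
hyperplanes `H` of `V`, of the number of points of `S` outside `H`. -/
noncomputable def projCogirth {F V : Type*} [DivisionRing F] [AddCommGroup V] [Module F V]
    (S : Set (Projectivization F V)) : ℕ :=
  sInf {n | ∃ H : Submodule F V, finrank F H = finrank F V - 1 ∧ n = (S \ projPts H).ncard}

section Helpers

lemma ncard_biUnion' {α ι : Type*} (s : Finset ι) (f : ι → Set α)
    (hf : ∀ i ∈ s, (f i).Finite)
    (hd : (s : Set ι).Pairwise (Function.onFun Disjoint f)) :
    (⋃ i ∈ s, f i).ncard = ∑ i ∈ s, (f i).ncard := by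
  classical
  induction s using Finset.induction with
  | empty => simp
  | @insert a t hnotmem ih =>
    have hfu : (⋃ x ∈ t, f x).Finite := by
      apply Set.Finite.biUnion t.finite_toSet
      intro i hi
      exact hf i (Finset.mem_insert_of_mem hi)
    have hdisj : Disjoint (f a) (⋃ x ∈ t, f x) := by
      refine Set.disjoint_iUnion₂_right.2 fun i hi => ?_
      exact hd (by simp) (by simp [hi]) (by rintro rfl; exact hnotmem hi)
    rw [Finset.set_biUnion_insert, Finset.sum_insert hnotmem,
      Set.ncard_union_eq hdisj (hf a (Finset.mem_insert_self a t)) hfu,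
      ih (fun i hi => hf i (Finset.mem_insert_of_mem hi))
        (hd.mono (by simp [Set.subset_def, Set.mem_insert_iff]; tauto))]


variable {F V : Type*} [Field F] [Fintype F] [AddCommGroup V] [Module F V] [FiniteDimensional F V]

lemma ncard_submodule' (W : Submodule F V) :
    (W : Set V).ncard = Fintype.card F ^ finrank F W := by
  have : Finite V := Module.finite_of_finite F
  have : Fintype W := Fintype.ofFinite _
  rw [← Nat.card_coe_set_eq, Nat.card_eq_fintype_card]
  exact Module.card_eq_pow_finrank

lemma ncard_univ_V : (Set.univ : Set V).ncard = Fintype.card F ^ finrank F V := by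
  have h := ncard_submodule' (F := F) (⊤ : Submodule F V)
  simpa using h

lemma ncard_lift' (P : Set (Projectivization F V)) :
    {v : V | ∃ h : v ≠ 0, Projectivization.mk F v h ∈ P}.ncard
      = (Fintype.card F - 1) * P.ncard := by
  classical
  have : Finite V := Module.finite_of_finite F
  have : Finite (Projectivization F V) := Quotient.finite _
  have hPfin : P.Finite := Set.toFinite P
  have hset : {v : V | ∃ h : v ≠ 0, Projectivization.mk F v h ∈ P}
      = ⋃ p ∈ hPfin.toFinset, {v : V | ∃ h : v ≠ 0, Projectivization.mk F v h = p} := by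
    ext v
    simp only [Set.mem_setOf_eq, Set.mem_iUnion, Set.Finite.mem_toFinset]
    constructor
    · rintro ⟨h, hm⟩; exact ⟨_, hm, h, rfl⟩
    · rintro ⟨p, hp, h, rfl⟩; exact ⟨h, hp⟩
  have hfib : ∀ p : Projectivization F V,
      {v : V | ∃ h : v ≠ 0, Projectivization.mk F v h = p}.ncard = Fintype.card F - 1 := by
    intro p
    have himg : {v : V | ∃ h : v ≠ 0, Projectivization.mk F v h = p}
        = (fun c : F => c • p.rep) '' {c : F | c ≠ 0} := by
      ext v
      simp only [Set.mem_setOf_eq, Set.mem_image]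
      constructor
      · rintro ⟨hv, hm⟩
        have hrep : Projectivization.mk F p.rep p.rep_nonzero = p := Projectivization.mk_rep p
        rw [← hrep, Projectivization.mk_eq_mk_iff] at hm
        obtain ⟨a, ha⟩ := hm
        exact ⟨a, a.ne_zero, ha⟩
      · rintro ⟨c, hc, rfl⟩
        have hv : c • p.rep ≠ 0 := smul_ne_zero hc p.rep_nonzero
        refine ⟨hv, ?_⟩
        conv_rhs => rw [← Projectivization.mk_rep p]
        rw [Projectivization.mk_eq_mk_iff]
        exact ⟨Units.mk0 c hc, rfl⟩
    rw [himg, Set.ncard_image_of_injective _ (smul_left_injective F p.rep_nonzero)]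
    have : {c : F | c ≠ 0} = Set.univ \ {0} := by ext; simp
    rw [this, Set.ncard_diff (by simp), Set.ncard_univ, Nat.card_eq_fintype_card]
    simp
  rw [hset, ncard_biUnion']
  · rw [Finset.sum_congr rfl (fun p _ => hfib p), Finset.sum_const, smul_eq_mul,
      Set.ncard_eq_toFinset_card P hPfin, mul_comm]
  · intro p hp; exact Set.toFinite _
  · intro p hp p' hp' hne
    simp only [Function.onFun]
    rw [Set.disjoint_left]
    rintro v ⟨h, rfl⟩ ⟨h', he⟩
    exact hne he

lemma exists_le_finrank_eq' (k : ℕ) (hk : k ≤ finrank F V) :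
    ∀ U : Submodule F V, finrank F U ≤ k → ∃ H : Submodule F V, U ≤ H ∧ finrank F H = k := by
  induction k with
  | zero =>
    intro U hU
    exact ⟨U, le_refl U, Nat.le_antisymm hU (Nat.zero_le _)⟩
  | succ k ih =>
    intro U hU
    rcases Nat.eq_or_lt_of_le hU with heq | hlt
    · exact ⟨U, le_refl U, heq⟩
    · obtain ⟨H', hUH', hH'⟩ := ih (le_of_lt (Nat.lt_of_succ_le hk)) U (Nat.lt_succ_iff.1 hlt)
      have hne : H' ≠ ⊤ := by
        intro h
        rw [h, finrank_top] at hH'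
        omega
      obtain ⟨x, hx⟩ : ∃ x : V, x ∉ H' := by
        by_contra h
        push_neg at h
        exact hne (Submodule.eq_top_iff'.2 h)
      have hx0 : x ≠ 0 := fun h => hx (h ▸ H'.zero_mem)
      refine ⟨H' ⊔ Submodule.span F {x}, le_trans hUH' le_sup_left, ?_⟩
      have hsum := Submodule.finrank_sup_add_finrank_inf_eq H' (Submodule.span F {x})
      rw [hH', finrank_span_singleton hx0] at hsum
      have hlt2 : H' < H' ⊔ Submodule.span F {x} := by
        refine lt_of_le_of_ne le_sup_left fun h => hx ?_
        have hmem : x ∈ H' ⊔ Submodule.span F {x} :=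
          (le_sup_right : Submodule.span F {x} ≤ _) (Submodule.mem_span_singleton_self x)
        rwa [← h] at hmem
      have := Submodule.finrank_lt_finrank_of_lt hlt2
      omega

lemma exists_hyperplane_avoiding' {x : V} (hx : x ≠ 0) :
    ∃ H : Submodule F V, finrank F H = finrank F V - 1 ∧ x ∉ H := by
  obtain ⟨C, hC⟩ := Submodule.exists_isCompl (Submodule.span F {x})
  have hsum := Submodule.finrank_add_eq_of_isCompl hC
  rw [finrank_span_singleton hx] at hsum
  refine ⟨C, by omega, fun hxC => hx ?_⟩
  have : x ∈ Submodule.span F {x} ⊓ C := ⟨Submodule.mem_span_singleton_self x, hxC⟩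
  rwa [hC.inf_eq_bot, Submodule.mem_bot] at this

lemma section_bound' (A : Set V)
    (hH : ∀ H : Submodule F V, finrank F H = finrank F V - 1 →
      A.ncard ≤ Fintype.card F * (A ∩ (H : Set V)).ncard)
    (H0 : Submodule F V) (hH0 : finrank F H0 = finrank F V - 1)
    (G : Submodule F V) (hGH0 : G ≤ H0) (hG : finrank F G = finrank F V - 2)
    (hr : 2 ≤ finrank F V) :
    (A ∩ (H0 : Set V)).ncard ≤ Fintype.card F * (A ∩ (G : Set V)).ncard := by
  classical
  have hVfin : Finite V := Module.finite_of_finite F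
  set q := Fintype.card F with hqdef
  set r := finrank F V with hrdef
  have hq2 : 2 ≤ q := Fintype.one_lt_card
  -- each v ∉ G generates a hyperplane through G
  have hgen : ∀ v : V, v ∉ G → G ≤ G ⊔ Submodule.span F {v} ∧
      finrank F ↥(G ⊔ Submodule.span F {v}) = r - 1 := by
    intro v hv
    have hv0 : v ≠ 0 := fun h => hv (h ▸ G.zero_mem)
    have hsum := Submodule.finrank_sup_add_finrank_inf_eq G (Submodule.span F {v})
    rw [hG, finrank_span_singleton hv0] at hsum
    have hlt : G < G ⊔ Submodule.span F {v} := by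
      refine lt_of_le_of_ne le_sup_left fun h => hv ?_
      have hmem : v ∈ G ⊔ Submodule.span F {v} :=
        (le_sup_right : Submodule.span F {v} ≤ _) (Submodule.mem_span_singleton_self v)
      rwa [← h] at hmem
    have h1 := Submodule.finrank_lt_finrank_of_lt hlt
    have h2 : finrank F (G ⊔ Submodule.span F {v} : Submodule F V) ≤ r - 1 := by omega
    exact ⟨le_sup_left, by omega⟩
  -- identification of hyperplanes through G
  have hident : ∀ H : Submodule F V, G ≤ H → finrank F H = r - 1 →
      ∀ v ∈ H, v ∉ G → H = G ⊔ Submodule.span F {v} := by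
    intro H hGH hHr v hvH hvG
    have hle : G ⊔ Submodule.span F {v} ≤ H :=
      sup_le hGH ((Submodule.span_singleton_le_iff_mem v H).2 hvH)
    exact (Submodule.eq_of_le_of_finrank_le hle (by rw [hHr, (hgen v hvG).2])).symm
  -- the set of hyperplanes through G
  set 𝓗 : Set (Submodule F V) := {H | G ≤ H ∧ finrank F H = r - 1} with h𝓗
  have h𝓗img : 𝓗 ⊆ (fun v => G ⊔ Submodule.span F {v}) '' {v : V | v ∉ G} := by
    intro H ⟨hGH, hHr⟩
    have hGltH : G < H := by
      refine lt_of_le_of_ne hGH fun h => ?_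
      rw [← h] at hHr
      omega
    obtain ⟨v, hvH, hvG⟩ := SetLike.exists_of_lt hGltH
    exact ⟨v, hvG, (hident H hGH hHr v hvH hvG).symm⟩
  have h𝓗fin : 𝓗.Finite := Set.Finite.subset (Set.Finite.image _ (Set.toFinite _)) h𝓗img
  set T : Finset (Submodule F V) := h𝓗fin.toFinset with hT
  have hmemT : ∀ H, H ∈ T ↔ (G ≤ H ∧ finrank F H = r - 1) := by
    intro H; rw [hT, Set.Finite.mem_toFinset]; rfl
  have hH0T : H0 ∈ T := (hmemT H0).2 ⟨hGH0, hH0⟩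
  -- disjointness of the pieces H \ G
  have hdisj : (T : Set (Submodule F V)).Pairwise
      (Function.onFun Disjoint fun H => (H : Set V) \ (G : Set V)) := by
    intro H hHT H' hH'T hne
    rw [Function.onFun, Set.disjoint_left]
    rintro v ⟨hvH, hvG⟩ ⟨hvH', _⟩
    have h1 := (hmemT H).1 (Finset.mem_coe.1 hHT)
    have h2 := (hmemT H').1 (Finset.mem_coe.1 hH'T)
    exact hne ((hident H h1.1 h1.2 v hvH hvG).trans
      (hident H' h2.1 h2.2 v hvH' hvG).symm)
  -- unions
  have hUnion : (⋃ H ∈ T, ((H : Set V) \ (G : Set V))) = Set.univ \ (G : Set V) := by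
    apply Set.Subset.antisymm
    · intro v
      simp only [Set.mem_iUnion, Set.mem_diff, Set.mem_univ, true_and]
      rintro ⟨H, _, _, hvG⟩
      exact hvG
    · rintro v ⟨-, hvG⟩
      have hv := hgen v hvG
      refine Set.mem_biUnion ((hmemT _).2 ⟨hv.1, hv.2⟩) ⟨?_, hvG⟩
      exact (le_sup_right : Submodule.span F {v} ≤ _) (Submodule.mem_span_singleton_self v)
  -- cardinalities
  set m := r - 2 with hm
  have hGcard : (G : Set V).ncard = q ^ m := by rw [ncard_submodule' G, hG]
  have hpiece : ∀ H ∈ T, ((H : Set V) \ (G : Set V)).ncard + q ^ m = q ^ m * q := by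
    intro H hHT
    have h1 := (hmemT H).1 hHT
    have h2 : ((H : Set V) \ (G : Set V)).ncard + (G : Set V).ncard = (H : Set V).ncard :=
      Set.ncard_diff_add_ncard_of_subset h1.1 (Set.toFinite _)
    have h3 : (H : Set V).ncard = q ^ m * q := by
      rw [ncard_submodule' H, h1.2, show r - 1 = m + 1 by omega, pow_succ]
    omega
  have huniv : (Set.univ \ (G : Set V)).ncard + q ^ m = q ^ m * q * q := by
    have h2 : (Set.univ \ (G : Set V)).ncard + (G : Set V).ncard = (Set.univ : Set V).ncard :=
      Set.ncard_diff_add_ncard_of_subset (Set.subset_univ _) (Set.toFinite _)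
    have h3 : (Set.univ : Set V).ncard = q ^ m * q * q := by
      have h4 := ncard_submodule' (F := F) (⊤ : Submodule F V)
      rw [finrank_top] at h4
      rw [show ((⊤ : Submodule F V) : Set V) = Set.univ from rfl] at h4
      rw [h4, ← hrdef, show r = m + 2 by omega]
      ring
    omega
  have hsum1 : ∑ H ∈ T, ((H : Set V) \ (G : Set V)).ncard = (Set.univ \ (G : Set V)).ncard := by
    rw [← ncard_biUnion' T _ (fun H _ => Set.toFinite _) hdisj, hUnion]
  have hBpos : 0 < q ^ m := pow_pos (by omega) m
  have hNT : T.card = q + 1 := by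
    have e2 : (Set.univ \ (G : Set V)).ncard + T.card * q ^ m = T.card * (q ^ m * q) := by
      have hs := Finset.sum_congr rfl hpiece
      rw [Finset.sum_add_distrib, Finset.sum_const, Finset.sum_const, hsum1, smul_eq_mul,
        smul_eq_mul] at hs
      exact hs
    zify at e2 huniv
    have e3 : (T.card : ℤ) * ((q : ℤ) ^ m * ((q : ℤ) - 1))
        = ((q : ℤ) + 1) * ((q : ℤ) ^ m * ((q : ℤ) - 1)) := by linear_combination huniv - e2
    have hne : ((q : ℤ) ^ m * ((q : ℤ) - 1)) ≠ 0 := by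
      have hq2' : (2 : ℤ) ≤ (q : ℤ) := by exact_mod_cast hq2
      have : (0 : ℤ) < (q : ℤ) ^ m * ((q : ℤ) - 1) :=
        mul_pos (pow_pos (by omega) m) (by omega)
      omega
    have := mul_right_cancel₀ hne e3
    exact_mod_cast this
  -- now the A-side counting
  have hApiece : ∀ H ∈ T, (A ∩ ((H : Set V) \ (G : Set V))).ncard + (A ∩ (G : Set V)).ncard
      = (A ∩ (H : Set V)).ncard := by
    intro H hHT
    have h1 := (hmemT H).1 hHT
    have key : (A ∩ (H : Set V)) ∩ (G : Set V) = A ∩ (G : Set V) := by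
      ext v
      exact ⟨fun ⟨⟨ha, _⟩, hg⟩ => ⟨ha, hg⟩, fun ⟨ha, hg⟩ => ⟨⟨ha, h1.1 hg⟩, hg⟩⟩
    have h2 := Set.ncard_inter_add_ncard_diff_eq_ncard (A ∩ (H : Set V)) (G : Set V)
      (Set.toFinite _)
    have hrw : (A ∩ (H : Set V)) \ (G : Set V) = A ∩ ((H : Set V) \ (G : Set V)) :=
      Set.inter_diff_assoc A _ _
    rw [key, hrw] at h2
    omega
  have hAdisj : (T : Set (Submodule F V)).Pairwise
      (Function.onFun Disjoint fun H => A ∩ ((H : Set V) \ (G : Set V))) := by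
    intro H hHT H' hH'T hne
    exact Disjoint.mono Set.inter_subset_right Set.inter_subset_right (hdisj hHT hH'T hne)
  have hAsum : ∑ H ∈ T, (A ∩ ((H : Set V) \ (G : Set V))).ncard = (A \ (G : Set V)).ncard := by
    rw [← ncard_biUnion' T _ (fun H _ => Set.toFinite _) hAdisj]
    congr 1
    have hu : (⋃ H ∈ T, (A ∩ ((H : Set V) \ (G : Set V)))) = A ∩ (Set.univ \ (G : Set V)) := by
      rw [← hUnion]
      ext v
      simp only [Set.mem_iUnion, Set.mem_inter_iff]
      tauto
    rw [hu]
    ext v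
    simp only [Set.mem_inter_iff, Set.mem_diff, Set.mem_univ, true_and]
  have hAdiff : (A ∩ (G : Set V)).ncard + (A \ (G : Set V)).ncard = A.ncard :=
    Set.ncard_inter_add_ncard_diff_eq_ncard A (G : Set V) (Set.toFinite _)
  -- final arithmetic
  set g := (A ∩ (G : Set V)).ncard with hgdef
  set a := A.ncard with hadef
  set c := (A \ (G : Set V)).ncard with hcdef
  set b0 := (A ∩ ((H0 : Set V) \ (G : Set V))).ncard with hb0def
  have herase : ∀ H ∈ T.erase H0, a ≤ q * ((A ∩ ((H : Set V) \ (G : Set V))).ncard + g) := by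
    intro H hHT
    have hmem := Finset.mem_of_mem_erase hHT
    have h1 := (hmemT H).1 hmem
    have h2 := hH H h1.2
    rwa [← hApiece H hmem] at h2
  have hsum2 := Finset.sum_le_sum herase
  rw [Finset.sum_const, smul_eq_mul, Finset.card_erase_of_mem hH0T, hNT] at hsum2
  have htot : ∑ H ∈ T, q * ((A ∩ ((H : Set V) \ (G : Set V))).ncard + g)
      = q * (c + (q + 1) * g) := by
    rw [← Finset.mul_sum, Finset.sum_add_distrib, hAsum, Finset.sum_const, hNT, smul_eq_mul]
  have hsplit := Finset.sum_erase_add T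
    (fun H => q * ((A ∩ ((H : Set V) \ (G : Set V))).ncard + g)) hH0T
  rw [htot] at hsplit
  -- combine
  have hfin1 : (q + 1 - 1) * a + q * (b0 + g) ≤ q * (c + (q + 1) * g) := by
    rw [← hsplit]
    exact Nat.add_le_add_right hsum2 _
  have h5 : q * (a + (b0 + g)) ≤ q * (c + (q + 1) * g) := by
    have he : q + 1 - 1 = q := by omega
    rw [he] at hfin1
    calc q * (a + (b0 + g)) = q * a + q * (b0 + g) := by ring
    _ ≤ q * (c + (q + 1) * g) := hfin1
  have h6 := Nat.le_of_mul_le_mul_left h5 (show 0 < q by omega)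
  rw [← hApiece H0 hH0T]
  have h7 : (q + 1) * g = q * g + g := by ring
  set X := q * g with hX
  omega


lemma ncard_units_smul {F V : Type*} [Field F] [Fintype F] [AddCommGroup V] [Module F V]
    (x : V) (hx : x ≠ 0) :
    ((fun c : F => c • x) '' {c : F | c ≠ 0}).ncard = Fintype.card F - 1 := by
  rw [Set.ncard_image_of_injective _ (smul_left_injective F hx)]
  have h : {c : F | c ≠ 0} = Set.univ \ {0} := by ext; simp
  rw [h, Set.ncard_diff (by simp), Set.ncard_univ, Nat.card_eq_fintype_card]
  simp

end Helpers

lemma core_subspace {F : Type*} [Field F] [Fintype F] (n : ℕ) :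
    ∀ {V : Type*} [AddCommGroup V] [Module F V] [FiniteDimensional F V],
    finrank F V = n → ∀ A : Set V, (0 : V) ∈ A →
    (∀ (c : F) (v : V), c ≠ 0 → v ∈ A → c • v ∈ A) →
    (∀ H : Submodule F V, finrank F H = finrank F V - 1 →
      A.ncard ≤ Fintype.card F * (A ∩ (H : Set V)).ncard) →
    ∃ W : Submodule F V, (W : Set V) = A := by
  induction n using Nat.strong_induction_on with
  | _ n ih =>
  intro V _ _ _ hrk A h0 hsc hH
  have hVfin : Finite V := Module.finite_of_finite F
  have hq2 : 2 ≤ Fintype.card F := Fintype.one_lt_card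
  set q := Fintype.card F with hq
  have hadd : ∀ a ∈ A, ∀ b ∈ A, a + b ∈ A := by
    intro a ha b hb
    by_cases ha0 : a = 0
    · simpa [ha0] using hb
    by_cases hb0 : b = 0
    · simpa [hb0] using ha
    by_cases hdep : ∃ c : F, b = c • a
    · obtain ⟨c, rfl⟩ := hdep
      have key : a + c • a = (1 + c) • a := by rw [add_smul, one_smul]
      by_cases h1c : 1 + c = 0
      · rw [key, h1c, zero_smul]; exact h0
      · rw [key]; exact hsc _ _ h1c ha
    · -- a, b independent
      have hbnotin : b ∉ Submodule.span F {a} := by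
        intro hmem
        obtain ⟨c, hc⟩ := Submodule.mem_span_singleton.1 hmem
        exact hdep ⟨c, hc.symm⟩
      set U := Submodule.span F {a} ⊔ Submodule.span F {b} with hU
      have haU : a ∈ U := Submodule.mem_sup_left (Submodule.mem_span_singleton_self a)
      have hbU : b ∈ U := Submodule.mem_sup_right (Submodule.mem_span_singleton_self b)
      have hUfin : finrank F U ≤ 2 := by
        have h1 := Submodule.finrank_sup_add_finrank_inf_eq
          (Submodule.span F {a}) (Submodule.span F {b})
        rw [finrank_span_singleton ha0, finrank_span_singleton hb0, ← hU] at h1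
        omega
      have hr2 : 2 ≤ finrank F V := by
        have hlt : Submodule.span F {a} < U := by
          refine lt_of_le_of_ne le_sup_left fun h => hbnotin ?_
          rw [h]; exact hbU
        have h1 := Submodule.finrank_lt_finrank_of_lt hlt
        rw [finrank_span_singleton ha0] at h1
        exact le_trans h1 (Submodule.finrank_le U)
      have hab0 : a + b ≠ 0 := by
        intro h
        exact hdep ⟨-1, by rw [neg_one_smul]; linear_combination (norm := module) h⟩
      by_cases hr2' : finrank F V = 2
      · -- dimension 2 : show every nonzero vector is in A
        have hall : ∀ v : V, v ≠ 0 → v ∈ A := by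
          intro v hv
          have hL : finrank F (Submodule.span F {v}) = finrank F V - 1 := by
            rw [finrank_span_singleton hv, hr2']
          by_cases hex : ∃ w, w ∈ A ∩ (Submodule.span F {v} : Set V) ∧ w ≠ 0
          · obtain ⟨w, ⟨hwA, hwL⟩, hw0⟩ := hex
            obtain ⟨c, hc⟩ := Submodule.mem_span_singleton.1 hwL
            have hc0 : c ≠ 0 := by
              rintro rfl
              rw [zero_smul] at hc
              exact hw0 hc.symm
            have h2 : c⁻¹ • w ∈ A := hsc _ _ (inv_ne_zero hc0) hwA
            rwa [← hc, inv_smul_smul₀ hc0] at h2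
          · exfalso
            push_neg at hex
            have hAL : A ∩ (Submodule.span F {v} : Set V) = {0} := by
              apply Set.Subset.antisymm
              · intro w hw
                have := hex w hw
                simp [this]
              · intro w hw
                simp only [Set.mem_singleton_iff] at hw
                subst hw
                exact ⟨h0, Submodule.zero_mem _⟩
            have hcard := hH (Submodule.span F {v}) hL
            rw [hAL, Set.ncard_singleton, mul_one] at hcard
            -- lower bound on A.ncard
            set Ba : Set V := (fun c : F => c • a) '' {c : F | c ≠ 0} with hBa
            set Bb : Set V := (fun c : F => c • b) '' {c : F | c ≠ 0} with hBb
            have hBsub : ({0} : Set V) ∪ Ba ∪ Bb ⊆ A := by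
              intro x hx
              rcases hx with (hx | hx) | hx
              · simp only [Set.mem_singleton_iff] at hx; subst hx; exact h0
              · obtain ⟨c, hc, rfl⟩ := hx; exact hsc _ _ hc ha
              · obtain ⟨c, hc, rfl⟩ := hx; exact hsc _ _ hc hb
            have hBaB : Disjoint Ba Bb := by
              rw [Set.disjoint_left]
              rintro x ⟨c, hc, rfl⟩ ⟨d, hd, heq⟩
              apply hdep
              have heq' : d • b = c • a := heq
              refine ⟨d⁻¹ * c, ?_⟩
              rw [mul_smul, ← heq', inv_smul_smul₀ hd]
            have h0Ba : Disjoint ({0} : Set V) Ba := by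
              rw [Set.disjoint_right]
              rintro x ⟨c, hc, rfl⟩ hx
              simp only [Set.mem_singleton_iff] at hx
              rcases smul_eq_zero.1 hx with h | h
              · exact hc h
              · exact ha0 h
            have h0Bb : Disjoint ({0} : Set V) Bb := by
              rw [Set.disjoint_right]
              rintro x ⟨c, hc, rfl⟩ hx
              simp only [Set.mem_singleton_iff] at hx
              rcases smul_eq_zero.1 hx with h | h
              · exact hc h
              · exact hb0 h
            have hcBa : Ba.ncard = q - 1 := ncard_units_smul a ha0
            have hcBb : Bb.ncard = q - 1 := ncard_units_smul b hb0
            have hcU : (({0} : Set V) ∪ Ba ∪ Bb).ncard = 1 + (q - 1) + (q - 1) := by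
              rw [Set.ncard_union_eq (by
                  rw [Set.disjoint_union_left]; exact ⟨h0Bb, hBaB⟩)
                (Set.toFinite _) (Set.toFinite _),
                Set.ncard_union_eq h0Ba (Set.toFinite _) (Set.toFinite _),
                Set.ncard_singleton, hcBa, hcBb]
            have hle := Set.ncard_le_ncard hBsub (Set.toFinite A)
            omega
        exact hall (a + b) hab0
      · -- dimension ≥ 3 : reduce to a hyperplane
        have hr3 : 3 ≤ finrank F V := by omega
        obtain ⟨H0, hUH0, hH0⟩ :=
          exists_le_finrank_eq' (finrank F V - 1) (by omega) U (by omega)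
        set A' : Set ↥H0 := Subtype.val ⁻¹' A with hA'
        have hGcoe : ∀ G' : Submodule F ↥H0,
            ((G'.map H0.subtype : Submodule F V) : Set V) = Subtype.val '' (G' : Set ↥H0) := by
          intro G'
          ext x
          simp [Submodule.mem_map]
        have hcardA' : A'.ncard = (A ∩ (H0 : Set V)).ncard := by
          rw [← Set.ncard_image_of_injective A' Subtype.val_injective, hA',
            Set.image_preimage_eq_inter_range, Subtype.range_val]
        have hinner : ∀ G' : Submodule F ↥H0, finrank F G' = finrank F ↥H0 - 1 →
            A'.ncard ≤ q * (A' ∩ (G' : Set ↥H0)).ncard := by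
          intro G' hG'
          set G := G'.map H0.subtype with hGdef
          have hGrk : finrank F G = finrank F V - 2 := by
            rw [hGdef, Submodule.finrank_map_subtype_eq, hG', hH0]
            omega
          have hGle : G ≤ H0 := Submodule.map_subtype_le H0 G'
          have hmain := section_bound' A hH H0 hH0 G hGle hGrk (by omega)
          have himg2 : Subtype.val '' (A' ∩ (G' : Set ↥H0)) = A ∩ (G : Set V) := by
            rw [hA', Set.image_inter Subtype.val_injective,
              Set.image_preimage_eq_inter_range, Subtype.range_val, hGdef, hGcoe G']
            ext x
            constructor
            · rintro ⟨⟨hxA, _⟩, hxG⟩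
              exact ⟨hxA, hxG⟩
            · rintro ⟨hxA, hxG⟩
              refine ⟨⟨hxA, ?_⟩, hxG⟩
              obtain ⟨y, hy, rfl⟩ := hxG
              exact y.2
          have hcard2 : (A' ∩ (G' : Set ↥H0)).ncard = (A ∩ (G : Set V)).ncard := by
            rw [← himg2, Set.ncard_image_of_injective _ Subtype.val_injective]
          rw [hcardA', hcard2]
          exact hmain
        have hfr : finrank F ↥H0 = n - 1 := by rw [hH0, hrk]
        have h0A' : (0 : ↥H0) ∈ A' := h0
        have hscA' : ∀ (c : F) (v : ↥H0), c ≠ 0 → v ∈ A' → c • v ∈ A' := by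
          intro c v hc hv
          exact hsc c v.1 hc hv
        obtain ⟨W', hW'⟩ := ih (n - 1) (by omega) hfr A' h0A' hscA' hinner
        have haH0 : a ∈ H0 := hUH0 haU
        have hbH0 : b ∈ H0 := hUH0 hbU
        have haW : (⟨a, haH0⟩ : ↥H0) ∈ W' := by
          have : (⟨a, haH0⟩ : ↥H0) ∈ A' := ha
          rwa [← hW'] at this
        have hbW : (⟨b, hbH0⟩ : ↥H0) ∈ W' := by
          have : (⟨b, hbH0⟩ : ↥H0) ∈ A' := hb
          rwa [← hW'] at this
        have hsum : (⟨a, haH0⟩ + ⟨b, hbH0⟩ : ↥H0) ∈ W' := W'.add_mem haW hbW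
        have hsum' : (⟨a, haH0⟩ + ⟨b, hbH0⟩ : ↥H0) ∈ A' := by
          rw [← hW']; exact hsum
        exact hsum'
  have hsm : ∀ (c : F) (v : V), v ∈ A → c • v ∈ A := by
    intro c v hv
    by_cases hc : c = 0
    · simpa [hc] using h0
    · exact hsc c v hc hv
  exact ⟨{ carrier := A
           zero_mem' := h0
           add_mem' := fun {x y} hx hy => hadd x hx y hy
           smul_mem' := fun c {v} hv => hsm c v hv }, rfl⟩


lemma core_subspace' {F V : Type*} [Field F] [Fintype F] [AddCommGroup V] [Module F V]
    [FiniteDimensional F V] (A : Set V) (h0 : (0 : V) ∈ A)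
    (hsc : ∀ (c : F) (v : V), c ≠ 0 → v ∈ A → c • v ∈ A)
    (hH : ∀ H : Submodule F V, finrank F H = finrank F V - 1 →
      A.ncard ≤ Fintype.card F * (A ∩ (H : Set V)).ncard) :
    ∃ W : Submodule F V, (W : Set V) = A :=
  core_subspace (finrank F V) rfl A h0 hsc hH


/-- Unweighted equality characterization: a spanning set `S ⊊ ℙ(V)` of projective points
over `GF(q)` satisfies `q·g*(S) = (q-1)·|S|` if and only if the complement of `S` in
`ℙ(V)` is the point set of a subspace `W` with `1 ≤ dim W < r`, i.e. exactly when `S` is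
a Bose–Burton geometry `PG(r-1,q) - PG(dim W - 1, q)`. -/

theorem proj_cogirth_equality_iff_bose_burton {F V : Type*} [Field F] [Fintype F]
    [AddCommGroup V] [Module F V] [FiniteDimensional F V]
    (q r : ℕ) (hq : Fintype.card F = q) (hr : finrank F V = r) (hr1 : 1 ≤ r)
    (S : Set (Projectivization F V))
    (hspan : Submodule.span F (Projectivization.rep '' S) = ⊤)
    (hne : S ≠ Set.univ) :
    q * projCogirth S = (q - 1) * S.ncard ↔
      ∃ W : Submodule F V, 1 ≤ finrank F W ∧ finrank F W < r ∧ Set.univ \ S = projPts W := by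
  subst hq hr
  have hVfin : Finite V := Module.finite_of_finite F
  have hPfin : Finite (Projectivization F V) := Quotient.finite _
  have hq2 : 2 ≤ Fintype.card F := Fintype.one_lt_card
  -- the vector set A : complement of the lift of S, together with 0
  set A : Set V := {v : V | v = 0 ∨ ∃ h : v ≠ 0, Projectivization.mk F v h ∉ S} with hA
  have h0A : (0 : V) ∈ A := Or.inl rfl
  have hnotA : ∀ v : V, v ∉ A ↔ ∃ h : v ≠ 0, Projectivization.mk F v h ∈ S := by
    intro v
    constructor
    · intro hv
      by_cases hv0 : v = 0
      · exact absurd (Or.inl hv0) hv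
      · refine ⟨hv0, ?_⟩
        by_contra hS
        exact hv (Or.inr ⟨hv0, hS⟩)
    · rintro ⟨hv0, hS⟩ (h | ⟨h1, h2⟩)
      · exact hv0 h
      · exact h2 hS
  -- membership of projective points in A
  have hmemrep : ∀ p : Projectivization F V, p ∉ S ↔ p.rep ∈ A := by
    intro p
    rw [← not_iff_not, hnotA, not_not]
    constructor
    · intro hp
      exact ⟨p.rep_nonzero, by rwa [Projectivization.mk_rep]⟩
    · rintro ⟨h, hmk⟩
      rwa [Projectivization.mk_rep] at hmk
  -- mk v ∈ projPts H ↔ v ∈ H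
  have hmkPts : ∀ (H : Submodule F V) (v : V) (hv : v ≠ 0),
      (Projectivization.mk F v hv ∈ projPts H ↔ v ∈ H) := by
    intro H v hv
    rw [projPts, Set.mem_setOf_eq, Projectivization.submodule_mk,
      Submodule.span_singleton_le_iff_mem]
  -- identity K1
  have hK1 : (Fintype.card F - 1) * S.ncard + A.ncard = Fintype.card F ^ finrank F V := by
    have hL := ncard_lift' S
    have hset : {v : V | ∃ h : v ≠ 0, Projectivization.mk F v h ∈ S} = Set.univ \ A := by
      ext v
      rw [Set.mem_diff]
      simp only [Set.mem_univ, true_and, Set.mem_setOf_eq]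
      exact (hnotA v).symm
    rw [hset] at hL
    have h2 : (Set.univ \ A).ncard + A.ncard = (Set.univ : Set V).ncard :=
      Set.ncard_diff_add_ncard_of_subset (Set.subset_univ A) (Set.toFinite _)
    have h3 : (Set.univ : Set V).ncard = Fintype.card F ^ finrank F V := by
      have h4 := ncard_submodule' (F := F) (⊤ : Submodule F V)
      rwa [finrank_top, show ((⊤ : Submodule F V) : Set V) = Set.univ from rfl] at h4
    omega
  -- identity K2
  have hK2 : ∀ H : Submodule F V, finrank F H = finrank F V - 1 →
      (Fintype.card F - 1) * (S \ projPts H).ncard + A.ncard + Fintype.card F ^ (finrank F V - 1)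
        = Fintype.card F ^ finrank F V + (A ∩ (H : Set V)).ncard := by
    intro H hHrk
    have hL := ncard_lift' (S \ projPts H)
    have hset : {v : V | ∃ h : v ≠ 0, Projectivization.mk F v h ∈ S \ projPts H}
        = Set.univ \ (A ∪ (H : Set V)) := by
      ext v
      simp only [Set.mem_setOf_eq, Set.mem_diff, Set.mem_univ, true_and, Set.mem_union, not_or]
      constructor
      · rintro ⟨hv, hvS, hvH⟩
        rw [hmkPts H v hv] at hvH
        refine ⟨?_, hvH⟩
        rw [hnotA]
        exact ⟨hv, hvS⟩
      · rintro ⟨hvA, hvH⟩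
        obtain ⟨hv, hvS⟩ := (hnotA v).1 hvA
        refine ⟨hv, hvS, ?_⟩
        rw [hmkPts H v hv]
        exact hvH
    rw [hset] at hL
    have h2 : (Set.univ \ (A ∪ (H : Set V))).ncard + (A ∪ (H : Set V)).ncard
        = (Set.univ : Set V).ncard :=
      Set.ncard_diff_add_ncard_of_subset (Set.subset_univ _) (Set.toFinite _)
    have h3 : (Set.univ : Set V).ncard = Fintype.card F ^ finrank F V := by
      have h4 := ncard_submodule' (F := F) (⊤ : Submodule F V)
      rwa [finrank_top, show ((⊤ : Submodule F V) : Set V) = Set.univ from rfl] at h4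
    have h5 : (A ∩ (H : Set V)).ncard + (A ∪ (H : Set V)).ncard
        = A.ncard + (H : Set V).ncard :=
      Set.ncard_inter_add_ncard_union _ _ (Set.toFinite _) (Set.toFinite _)
    have h6 : (H : Set V).ncard = Fintype.card F ^ (finrank F V - 1) := by rw [ncard_submodule' H, hHrk]
    omega
  -- per-hyperplane translation
  have hkey : ∀ H : Submodule F V, finrank F H = finrank F V - 1 →
      ((Fintype.card F : ℤ) * (A ∩ (H : Set V)).ncard - A.ncard
        = ((Fintype.card F : ℤ) - 1) * ((Fintype.card F : ℤ) * (S \ projPts H).ncard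
            - ((Fintype.card F : ℤ) - 1) * S.ncard)) := by
    intro H hHrk
    have h1 := hK1
    have h2 := hK2 H hHrk
    have hle1 : 1 ≤ Fintype.card F := by omega
    zify [hle1] at h1 h2
    have hqr : (Fintype.card F : ℤ) ^ finrank F V
        = (Fintype.card F : ℤ) * (Fintype.card F : ℤ) ^ (finrank F V - 1) := by
      rw [← pow_succ']
      congr 1
      omega
    linear_combination ((Fintype.card F : ℤ) - 1) * h1 - (Fintype.card F : ℤ) * h2 - hqr
  -- the two directions
  have hq0 : (0 : ℤ) < (Fintype.card F : ℤ) := by exact_mod_cast (by omega : 0 < Fintype.card F)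
  have hq10 : (0 : ℤ) < (Fintype.card F : ℤ) - 1 := by
    have : (2 : ℤ) ≤ (Fintype.card F : ℤ) := by exact_mod_cast hq2
    omega
  constructor
  · -- equality implies Bose-Burton
    intro hmain
    -- the sInf is attained
    have hTh : ∀ H : Submodule F V, finrank F H = finrank F V - 1 →
        projCogirth S ≤ (S \ projPts H).ncard := by
      intro H hHrk
      exact Nat.sInf_le ⟨H, hHrk, rfl⟩
    have hall : ∀ H : Submodule F V, finrank F H = finrank F V - 1 →
        A.ncard ≤ Fintype.card F * (A ∩ (H : Set V)).ncard := by
      intro H hHrk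
      have h1 := hTh H hHrk
      have h2 : (Fintype.card F - 1) * S.ncard ≤ Fintype.card F * (S \ projPts H).ncard := by
        calc (Fintype.card F - 1) * S.ncard = Fintype.card F * projCogirth S := hmain.symm
        _ ≤ Fintype.card F * (S \ projPts H).ncard := Nat.mul_le_mul_left _ h1
      have hk := hkey H hHrk
      have h2' : ((Fintype.card F : ℤ) - 1) * S.ncard
          ≤ (Fintype.card F : ℤ) * (S \ projPts H).ncard := by
        have hle1 : 1 ≤ Fintype.card F := by omega
        zify [hle1] at h2
        exact h2
      have h3 : (0 : ℤ) ≤ (Fintype.card F : ℤ) * (A ∩ (H : Set V)).ncard - A.ncard := by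
        rw [hk]
        have := sub_nonneg.2 h2'
        positivity
      have h4 : (A.ncard : ℤ) ≤ (Fintype.card F : ℤ) * (A ∩ (H : Set V)).ncard := by omega
      exact_mod_cast h4
    have hscA : ∀ (c : F) (v : V), c ≠ 0 → v ∈ A → c • v ∈ A := by
      intro c v hc hv
      rcases hv with hv | ⟨hv0, hvS⟩
      · subst hv
        rw [smul_zero]
        exact h0A
      · have hcv : c • v ≠ 0 := smul_ne_zero hc hv0
        refine Or.inr ⟨hcv, ?_⟩
        have : Projectivization.mk F (c • v) hcv = Projectivization.mk F v hv0 := by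
          rw [Projectivization.mk_eq_mk_iff]
          exact ⟨Units.mk0 c hc, rfl⟩
        rwa [this]
    obtain ⟨W, hW⟩ := core_subspace' A h0A hscA hall
    -- S is nonempty
    have hSne : S.Nonempty := by
      rcases Set.eq_empty_or_nonempty S with h | h
      · exfalso
        rw [h, Set.image_empty, Submodule.span_empty] at hspan
        have : finrank F V = 0 := by
          rw [← finrank_top F V, ← hspan, finrank_bot]
        omega
      · exact h
    refine ⟨W, ?_, ?_, ?_⟩
    · -- 1 ≤ finrank W
      obtain ⟨p, hp⟩ : ∃ p : Projectivization F V, p ∉ S := by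
        by_contra h
        push_neg at h
        exact hne (Set.eq_univ_of_forall h)
      have hrep : p.rep ∈ A := (hmemrep p).1 hp
      rw [← hW] at hrep
      by_contra hcon
      have h0' : finrank F W = 0 := by omega
      have hbot : W = ⊥ := (Submodule.finrank_eq_zero (R := F) (M := V)).1 h0'
      rw [hbot] at hrep
      exact p.rep_nonzero (by simpa using hrep)
    · -- finrank W < r
      obtain ⟨p, hp⟩ := hSne
      have hrep : p.rep ∉ A := by
        intro h
        exact ((hmemrep p).2 h) hp
      have hWne : W ≠ ⊤ := by
        intro h
        apply hrep
        rw [← hW, h]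
        trivial
      exact Submodule.finrank_lt hWne
    · -- univ \ S = projPts W
      ext p
      simp only [Set.mem_diff, Set.mem_univ, true_and]
      rw [show (p ∈ projPts W) = (p.submodule ≤ W) from rfl, Projectivization.submodule_eq,
        Submodule.span_singleton_le_iff_mem, hmemrep p, ← hW]
      exact Iff.rfl
  · -- Bose-Burton implies equality
    rintro ⟨W, hW1, hWr, hWS⟩
    -- A is the coe of W
    have hAW : A = (W : Set V) := by
      ext v
      constructor
      · rintro (hv | ⟨hv0, hvS⟩)
        · subst hv
          exact W.zero_mem
        · have : Projectivization.mk F v hv0 ∈ Set.univ \ S := ⟨trivial, hvS⟩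
          rw [hWS, projPts, Set.mem_setOf_eq, Projectivization.submodule_mk,
            Submodule.span_singleton_le_iff_mem] at this
          exact this
      · intro hv
        by_cases hv0 : v = 0
        · exact Or.inl hv0
        · refine Or.inr ⟨hv0, ?_⟩
          have : Projectivization.mk F v hv0 ∈ projPts W := by
            rw [projPts, Set.mem_setOf_eq, Projectivization.submodule_mk,
              Submodule.span_singleton_le_iff_mem]
            exact hv
          rw [← hWS] at this
          exact this.2
    -- counting for subspaces
    have hcount : ∀ H : Submodule F V, (A ∩ (H : Set V)).ncard
        = Fintype.card F ^ finrank F (W ⊓ H : Submodule F V) := by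
      intro H
      rw [hAW, show ((W : Set V) ∩ (H : Set V)) = ((W ⊓ H : Submodule F V) : Set V) from rfl,
        ncard_submodule']
    have hAcard : A.ncard = Fintype.card F ^ finrank F W := by
      rw [hAW, ncard_submodule']
    -- all hyperplanes bound
    have hall : ∀ H : Submodule F V, finrank F H = finrank F V - 1 →
        A.ncard ≤ Fintype.card F * (A ∩ (H : Set V)).ncard := by
      intro H hHrk
      have hinf : finrank F W - 1 ≤ finrank F (W ⊓ H : Submodule F V) := by
        have h1 := Submodule.finrank_sup_add_finrank_inf_eq W H
        have h2 : finrank F (W ⊔ H : Submodule F V) ≤ finrank F V := Submodule.finrank_le _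
        omega
      rw [hcount H, hAcard, ← pow_succ']
      exact Nat.pow_le_pow_right (by omega) (by omega)
    -- one hyperplane with equality
    obtain ⟨x, hxW, hx0⟩ : ∃ x ∈ W, x ≠ (0 : V) := by
      rw [← Submodule.ne_bot_iff]
      intro h
      rw [h, finrank_bot] at hW1
      omega
    obtain ⟨H0, hH0rk, hxH0⟩ := exists_hyperplane_avoiding' (F := F) hx0
    have hinfeq : finrank F (W ⊓ H0 : Submodule F V) = finrank F W - 1 := by
      have h1 := Submodule.finrank_sup_add_finrank_inf_eq W H0
      have h2 : finrank F (W ⊔ H0 : Submodule F V) ≤ finrank F V := Submodule.finrank_le _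
      have h3 : W ⊓ H0 < W := by
        refine lt_of_le_of_ne inf_le_left fun h => hxH0 ?_
        have : x ∈ W ⊓ H0 := by rw [h]; exact hxW
        exact this.2
      have h4 := Submodule.finrank_lt_finrank_of_lt h3
      omega
    have heq0 : A.ncard = Fintype.card F * (A ∩ (H0 : Set V)).ncard := by
      rw [hcount H0, hAcard, hinfeq, ← pow_succ']
      congr 1
      omega
    -- translate to the S side
    have hSall : ∀ H : Submodule F V, finrank F H = finrank F V - 1 →
        (Fintype.card F - 1) * S.ncard ≤ Fintype.card F * (S \ projPts H).ncard := by
      intro H hHrk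
      have hk := hkey H hHrk
      have h1 := hall H hHrk
      have h2 : (0 : ℤ) ≤ (Fintype.card F : ℤ) * (A ∩ (H : Set V)).ncard - A.ncard := by
        have : (A.ncard : ℤ) ≤ (Fintype.card F : ℤ) * (A ∩ (H : Set V)).ncard := by
          exact_mod_cast h1
        omega
      rw [hk] at h2
      have h3 : (0 : ℤ) ≤ (Fintype.card F : ℤ) * (S \ projPts H).ncard
          - ((Fintype.card F : ℤ) - 1) * S.ncard := by
        by_contra hcon
        push_neg at hcon
        nlinarith
      have hle1 : 1 ≤ Fintype.card F := by omega
      zify [hle1]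
      omega
    have hS0 : (Fintype.card F - 1) * S.ncard = Fintype.card F * (S \ projPts H0).ncard := by
      have hk := hkey H0 hH0rk
      have h2 : (0 : ℤ) = (Fintype.card F : ℤ) * (A ∩ (H0 : Set V)).ncard - A.ncard := by
        have : (A.ncard : ℤ) = (Fintype.card F : ℤ) * (A ∩ (H0 : Set V)).ncard := by
          exact_mod_cast heq0
        omega
      rw [hk] at h2
      have h3 : (Fintype.card F : ℤ) * (S \ projPts H0).ncard
          = ((Fintype.card F : ℤ) - 1) * S.ncard := by
        have := h2.symm
        have hne0 : ((Fintype.card F : ℤ) - 1) ≠ 0 := by omega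
        have := mul_eq_zero.1 (by linarith : ((Fintype.card F : ℤ) - 1)
          * ((Fintype.card F : ℤ) * (S \ projPts H0).ncard
            - ((Fintype.card F : ℤ) - 1) * S.ncard) = 0)
        rcases this with h | h
        · exact absurd h hne0
        · omega
      have hle1 : 1 ≤ Fintype.card F := by omega
      zify [hle1]
      omega
    -- conclude about the sInf
    have hmem : projCogirth S ∈ {n | ∃ H : Submodule F V,
        finrank F H = finrank F V - 1 ∧ n = (S \ projPts H).ncard} := by
      apply Nat.sInf_mem
      exact ⟨(S \ projPts H0).ncard, H0, hH0rk, rfl⟩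
    obtain ⟨H1, hH1rk, hH1⟩ := hmem
    have hge : (Fintype.card F - 1) * S.ncard ≤ Fintype.card F * projCogirth S := by
      rw [hH1]
      exact hSall H1 hH1rk
    have hle : Fintype.card F * projCogirth S ≤ (Fintype.card F - 1) * S.ncard := by
      rw [hS0]
      exact Nat.mul_le_mul_left _ (Nat.sInf_le ⟨H0, hH0rk, rfl⟩)
    omega
end
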